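/- arXiv:1610.05416 — 12 statements merged into one kernel-verified Lean document; each statement's English description precedes it below -/
import Mathlib

section
/- Let S_1, ..., S_n be arbitrary subsets of ℝ^m. For every point z in the convex hull of the Minkowski sum S_1 + ... + S_n, there exist points z^i ∈ conv S_i for i = 1,...,n such that z = z^1 + ... + z^n and z^i ∈ S_i for all but at most m indices i. -/
/-!
Lift every point `x ∈ S i` to `(x, eᵢ) ∈ E × ℝⁿ`. Writing `z = ∑ yᵢ` with `yᵢ ∈ conv Sᵢ` exhibits
`(z, 1)` as a nonnegative combination of lifted points, and by the conic Carathéodory theorem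
at most `dim E + n` linearly independent ones suffice. The `ℝⁿ`-component forces the weights of
the points lifted from each `Sᵢ` to sum to `1`, so every index gets at least one point, and at
most `dim E` indices get more than one; an index with a single point of weight `1` contributes a
point of `Sᵢ` itself.
-/

/-- The Minkowski sum `S 0 + S 1 + ... + S (n-1)` of a family of sets. -/
def minkSum {E : Type*} [AddCommMonoid E] {n : ℕ} (S : Fin n → Set E) : Set E :=
  {x | ∃ w : Fin n → E, (∀ i, w i ∈ S i) ∧ x = ∑ i, w i}

open Finset Pointwise

lemma minkSum_eq_sum {E : Type*} [AddCommMonoid E] {n : ℕ} (S : Fin n → Set E) :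
    minkSum S = ∑ i, S i := by
  ext x
  simp only [minkSum, Set.mem_ofPred_eq, Set.mem_fintype_sum, exists_prop, eq_comm]

section ConicCaratheodory

variable {ι E : Type*} [AddCommGroup E] [Module ℝ E] {v : ι → E}

lemma exists_erase_sum_smul_eq_of_not_linearIndepOn [DecidableEq ι] {t : Finset ι} {c : ι → ℝ}
    (hc : ∀ i ∈ t, 0 ≤ c i) (h : ¬LinearIndepOn ℝ v t) :
    ∃ j ∈ t, ∃ c' : ι → ℝ, (∀ i ∈ t, 0 ≤ c' i) ∧
      ∑ i ∈ t.erase j, c' i • v i = ∑ i ∈ t, c i • v i := by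
  obtain ⟨g, hg, hpos⟩ : ∃ g : ι → ℝ, ∑ i ∈ t, g i • v i = 0 ∧ ∃ i ∈ t, 0 < g i := by
    simp only [linearIndepOn_finset_iff, not_forall] at h
    obtain ⟨g, hg, i, hi, hgi⟩ := h
    rcases Ne.lt_or_gt hgi with hneg | hpos
    · exact ⟨-g, by simp [neg_smul, hg], i, hi, by simpa using hneg⟩
    · exact ⟨g, hg, i, hi, hpos⟩
  -- Move `c` along `-g` as far as nonnegativity allows: the coefficient minimising `c / g` dies.
  obtain ⟨j, hj, hmin⟩ := (t.filter (0 < g ·)).exists_min_image (fun i => c i / g i)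
    (by simpa [Finset.Nonempty] using hpos)
  rw [mem_filter] at hj
  have hr : 0 ≤ c j / g j := div_nonneg (hc j hj.1) hj.2.le
  refine ⟨j, hj.1, fun i => c i - c j / g j * g i, fun i hi => ?_, ?_⟩
  · rw [sub_nonneg]
    by_cases hgi : 0 < g i
    · exact (le_div_iff₀ hgi).1 (hmin i (mem_filter.2 ⟨hi, hgi⟩))
    · exact (mul_nonpos_of_nonneg_of_nonpos hr (not_lt.1 hgi)).trans (hc i hi)
  · rw [sum_erase _ (by simp only [div_mul_cancel₀ _ hj.2.ne', sub_self, zero_smul])]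
    simp only [sub_smul, mul_smul, sum_sub_distrib, ← smul_sum, hg, smul_zero, sub_zero]

theorem exists_linearIndepOn_sum_smul_eq (t : Finset ι) (c : ι → ℝ) (hc : ∀ i ∈ t, 0 ≤ c i) :
    ∃ s ⊆ t, ∃ c' : ι → ℝ, (∀ i ∈ s, 0 ≤ c' i) ∧
      ∑ i ∈ s, c' i • v i = ∑ i ∈ t, c i • v i ∧ LinearIndepOn ℝ v s := by
  classical
  induction t using Finset.strongInduction generalizing c with
  | H t ih =>
  by_cases h : LinearIndepOn ℝ v t
  · exact ⟨t, subset_rfl, c, hc, rfl, h⟩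
  obtain ⟨j, hj, c', hc', hsum⟩ := exists_erase_sum_smul_eq_of_not_linearIndepOn hc h
  obtain ⟨s, hs, c'', hc'', hsum', hli⟩ :=
    ih _ (erase_ssubset hj) c' fun i hi => hc' i (mem_of_mem_erase hi)
  exact ⟨s, hs.trans (erase_subset j t), c'', hc'', hsum'.trans hsum, hli⟩

end ConicCaratheodory

lemma card_filter_one_lt_card_fiber_le {α ι : Type*} [Fintype ι] [DecidableEq ι]
    {s : Finset α} {f : α → ι} (hf : ∀ i, (s.filter (f · = i)).Nonempty) {d : ℕ}
    (hs : s.card ≤ d + Fintype.card ι) :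
    (univ.filter fun i => 1 < (s.filter (f · = i)).card).card ≤ d := by
  have : Fintype.card ι + (univ.filter fun i => 1 < (s.filter (f · = i)).card).card ≤ s.card :=
    calc _ = ∑ i, (1 + if 1 < (s.filter (f · = i)).card then 1 else 0) := by
          simp [sum_add_distrib, sum_boole]
      _ ≤ ∑ i, (s.filter (f · = i)).card := sum_le_sum fun i _ => by
          have := (hf i).card_pos
          split_ifs <;> omega
      _ = s.card := (card_eq_sum_card_fiberwise fun a _ => mem_univ (f a)).symm
  omega

section ShapleyFolkman

variable {ι E : Type*} [Fintype ι] [AddCommGroup E] [Module ℝ E]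

lemma exists_sparse_decomposition_of_sum_smul_eq {α : Type*} [DecidableEq ι] (S : ι → Set E)
    (idx : α → ι) (x : α → E) (hx : ∀ a, x a ∈ S (idx a)) {s : Finset α} {c : α → ℝ}
    (hc : ∀ a ∈ s, 0 ≤ c a) {z : E}
    (hsum : ∑ a ∈ s, c a • (x a, (Pi.single (idx a) 1 : ι → ℝ)) = (z, 1)) {d : ℕ}
    (hcard : s.card ≤ d + Fintype.card ι) :
    ∃ y : ι → E, (∀ i, y i ∈ convexHull ℝ (S i)) ∧ z = ∑ i, y i ∧
      ∃ T : Finset ι, T.card ≤ d ∧ ∀ i ∉ T, y i ∈ S i := by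
  have hz : ∑ a ∈ s, c a • x a = z := by simpa [Prod.fst_sum] using congrArg Prod.fst hsum
  have hfiber : ∀ i, ∑ a ∈ s.filter (idx · = i), c a = 1 := fun i => by
    simpa [Prod.snd_sum, Pi.single_apply, eq_comm, sum_filter] using
      congrFun (congrArg Prod.snd hsum) i
  have hne : ∀ i, (s.filter (idx · = i)).Nonempty := fun i =>
    nonempty_of_sum_ne_zero ((hfiber i).trans_ne one_ne_zero)
  refine ⟨fun i => ∑ a ∈ s.filter (idx · = i), c a • x a, fun i => ?_, ?_,
    _, card_filter_one_lt_card_fiber_le hne hcard, fun i hi => ?_⟩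
  · refine (convex_convexHull ℝ (S i)).sum_mem (fun a ha => hc a (mem_filter.1 ha).1) (hfiber i)
      fun a ha => subset_convexHull ℝ _ ?_
    exact (mem_filter.1 ha).2 ▸ hx a
  · rw [← hz, sum_fiberwise]
  · obtain ⟨a, ha⟩ := card_eq_one.1 (le_antisymm (by simpa using hi) (hne i).card_pos)
    have hmem : a ∈ s.filter (idx · = i) := ha ▸ mem_singleton_self a
    obtain rfl : idx a = i := (mem_filter.1 hmem).2
    have hca : c a = 1 := by simpa [ha] using hfiber (idx a)
    simpa [ha, hca] using hx a

theorem exists_sparse_decomposition_of_mem_convexHull_sum [FiniteDimensional ℝ E]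
    (S : ι → Set E) {z : E} (hz : z ∈ convexHull ℝ (∑ i, S i)) :
    ∃ y : ι → E, (∀ i, y i ∈ convexHull ℝ (S i)) ∧ z = ∑ i, y i ∧
      ∃ T : Finset ι, T.card ≤ Module.finrank ℝ E ∧ ∀ i ∉ T, y i ∈ S i := by
  classical
  rw [convexHull_sum, Set.mem_fintype_sum] at hz
  obtain ⟨y, hy, rfl⟩ := hz
  choose κ _ w x hw₀ hw₁ hx hwx using fun i => mem_convexHull_iff_exists_fintype.1 (hy i)
  let lift : (Σ i, κ i) → E × (ι → ℝ) := fun a => (x a.1 a.2, Pi.single a.1 1)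
  have hlift : ∑ a, w a.1 a.2 • lift a = (∑ i, y i, 1) := by
    ext
    · simp [lift, Fintype.sum_sigma, Prod.fst_sum, hwx]
    · simp [lift, Fintype.sum_sigma, Prod.snd_sum, Pi.single_apply, hw₁]
  obtain ⟨s, -, c, hc, hsum, hli⟩ :=
    exists_linearIndepOn_sum_smul_eq (v := lift) univ (fun a => w a.1 a.2) fun a _ => hw₀ _ _
  refine exists_sparse_decomposition_of_sum_smul_eq S Sigma.fst (fun a => x a.1 a.2)
    (fun a => hx a.1 a.2) hc (hsum.trans hlift) ?_
  simpa [Module.finrank_prod] using LinearIndependent.fintype_card_le_finrank hli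

end ShapleyFolkman

/-- **Shapley–Folkman lemma.** -/
theorem shapley_folkman (m n : ℕ) (S : Fin n → Set (Fin m → ℝ))
    (z : Fin m → ℝ) (hz : z ∈ convexHull ℝ (minkSum S)) :
    ∃ z' : Fin n → (Fin m → ℝ),
      (∀ i, z' i ∈ convexHull ℝ (S i)) ∧ z = ∑ i, z' i ∧
      ∃ T : Finset (Fin n), T.card ≤ m ∧ ∀ i ∉ T, z' i ∈ S i := by
  rw [minkSum_eq_sum] at hz
  simpa using exists_sparse_decomposition_of_mem_convexHull_sum S hz
end

section
/- Let S_1, ..., S_n be arbitrary subsets of ℝ^m. If z lies in the convex hull of the Minkowski sum S_1 + ... + S_n, then there exist integers k_1,...,k_n with 1 ≤ k_i ≤ m and k_1 + ... + k_n ≤ m - 1 + n, and points z^i in the k_i-th convex hull conv_{k_i} S_i, such that z_s = Σ_{i=1}^n z^i_s for every coordinate s = 1,...,m-1 and z_m ≥ Σ_{i=1}^n z^i_m. -/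
/-- The `k`-th convex hull of `S`: all convex combinations of `k` points of `S`. -/
def convHullK {E : Type*} [AddCommMonoid E] [Module ℝ E] (k : ℕ) (S : Set E) : Set E :=
  {x | ∃ (v : Fin k → E) (α : Fin k → ℝ),
    (∀ j, v j ∈ S) ∧ (∀ j, 0 ≤ α j) ∧ (∑ j, α j) = 1 ∧ x = ∑ j, α j • v j}

/-!
Write `z = ∑ₜ cₜ ∑ᵢ yₜᵢ` with `yₜᵢ ∈ Sᵢ`. The weights `νᵢₜ = cₜ` are a nonnegative solution of the
`n + (m - 1)` linear equations "each row of `ν` sums to `1`" and "the first `m - 1` coordinates of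
`∑ᵢ ∑ₜ νᵢₜ yₜᵢ` are those of `z`". As in the simplex method, while more than `n + m - 1` weights
are nonzero there is a kernel direction supported on them; oriented so as not to increase the last
coordinate, it can be followed until one more weight vanishes. Every row keeps a nonzero weight, so
at most `n + m - 1` nonzero weights in total leave at most `m` in each row.
-/

open Finset Module

section BasicSolution

variable {κ F : Type*} [Fintype κ] [AddCommGroup F] [Module ℝ F] [FiniteDimensional ℝ F]

theorem exists_ne_zero_sum_smul_eq_zero_of_finrank_lt_card (a : κ → F) {s : Finset κ}
    (hs : finrank ℝ F < #s) :
    ∃ d : κ → ℝ, d ≠ 0 ∧ (∀ k ∉ s, d k = 0) ∧ ∑ k, d k • a k = 0 := by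
  classical
  have hdep : ¬ LinearIndependent ℝ (fun k : s => a k) := fun h =>
    hs.not_ge (by simpa using h.fintype_card_le_finrank)
  obtain ⟨g, hg, k, hk⟩ := Fintype.not_linearIndependent_iff.mp hdep
  have hext : ∀ k : s, Subtype.val.extend g 0 (k : κ) = g k :=
    Subtype.val_injective.extend_apply g 0
  have hzero : ∀ j ∉ s, Subtype.val.extend g 0 j = 0 := fun j hj =>
    Function.extend_apply' _ _ _ fun ⟨j', hj'⟩ => hj (hj' ▸ j'.2)
  refine ⟨Subtype.val.extend g 0, fun h => hk ?_, hzero, ?_⟩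
  · simpa [hext] using congrFun h k
  · rw [← sum_subset (subset_univ s) fun j _ hj => by rw [hzero j hj, zero_smul],
      ← sum_coe_sort s]
    simpa [hext] using hg

theorem exists_nonneg_add_smul_eq_zero {α d : κ → ℝ} (hα : 0 ≤ α) (hd : ∃ k, d k < 0) :
    ∃ θ : ℝ, 0 ≤ θ ∧ 0 ≤ α + θ • d ∧ ∃ k, d k < 0 ∧ (α + θ • d) k = 0 := by
  classical
  obtain ⟨k, hk, hmin⟩ := exists_min_image {j | d j < 0} (fun j => α j / -d j)
    (by simpa [Finset.Nonempty] using hd)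
  rw [mem_filter_univ k] at hk
  refine ⟨α k / -d k, div_nonneg (hα k) (neg_nonneg.mpr hk.le), fun j => ?_, k, hk, ?_⟩
  · rcases lt_or_ge (d j) 0 with hj | hj
    · have := hmin j ((mem_filter_univ j).mpr hj)
      rw [le_div_iff₀ (neg_pos.mpr hj)] at this
      simp only [Pi.add_apply, Pi.smul_apply, smul_eq_mul, Pi.zero_apply]
      linarith
    · exact add_nonneg (hα j) (mul_nonneg (div_nonneg (hα k) (neg_nonneg.mpr hk.le)) hj)
  · simp only [Pi.add_apply, Pi.smul_apply, smul_eq_mul]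
    field_simp [hk.ne]
    ring

theorem sum_add_smul_smul {M : Type*} [AddCommGroup M] [Module ℝ M] (α d : κ → ℝ) (θ : ℝ)
    (b : κ → M) : ∑ k, (α + θ • d) k • b k = ∑ k, α k • b k + θ • ∑ k, d k • b k := by
  simp [add_smul, mul_smul, sum_add_distrib, smul_sum]

theorem exists_descent_direction {a : κ → F} (c : κ → ℝ)
    (ha : ∀ d : κ → ℝ, 0 ≤ d → ∑ k, d k • a k = 0 → d = 0) {s : Finset κ}
    (hs : finrank ℝ F < #s) :
    ∃ d : κ → ℝ, (∃ k, d k < 0) ∧ (∀ k ∉ s, d k = 0) ∧ ∑ k, d k • a k = 0 ∧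
      ∑ k, d k • c k ≤ 0 := by
  obtain ⟨d, hd, hds, hda⟩ := exists_ne_zero_sum_smul_eq_zero_of_finrank_lt_card a hs
  have exists_neg : ∀ e : κ → ℝ, e ≠ 0 → ∑ k, e k • a k = 0 → ∃ k, e k < 0 := by
    intro e he hea
    by_contra! hnonneg
    exact he (ha e hnonneg hea)
  rcases le_total (∑ k, d k • c k) 0 with hdc | hdc
  · exact ⟨d, exists_neg d hd hda, hds, hda, hdc⟩
  · have hda' : ∑ k, (-d) k • a k = 0 := by simp [hda]
    refine ⟨-d, exists_neg (-d) (neg_ne_zero.mpr hd) hda', fun k hk => by simp [hds k hk], hda', ?_⟩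
    simpa using hdc

theorem exists_nonneg_sum_smul_eq_of_card_support_le_finrank {a : κ → F} (c : κ → ℝ)
    (ha : ∀ d : κ → ℝ, 0 ≤ d → ∑ k, d k • a k = 0 → d = 0) {α : κ → ℝ} (hα : 0 ≤ α) :
    ∃ β : κ → ℝ, 0 ≤ β ∧ ∑ k, β k • a k = ∑ k, α k • a k ∧
      ∑ k, β k • c k ≤ ∑ k, α k • c k ∧ #{k | β k ≠ 0} ≤ finrank ℝ F := by
  classical
  suffices key : ∀ s : Finset κ, ∀ α : κ → ℝ, 0 ≤ α → (∀ k ∉ s, α k = 0) →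
      ∃ β : κ → ℝ, 0 ≤ β ∧ ∑ k, β k • a k = ∑ k, α k • a k ∧
        ∑ k, β k • c k ≤ ∑ k, α k • c k ∧ #{k | β k ≠ 0} ≤ finrank ℝ F from
    key univ α hα fun k hk => absurd (mem_univ k) hk
  intro s
  induction s using Finset.strongInduction with
  | H s ih =>
  intro α hα hαs
  by_cases hs : #s ≤ finrank ℝ F
  · refine ⟨α, hα, rfl, le_rfl, le_trans (card_le_card fun k hk => ?_) hs⟩
    by_contra hks
    exact (mem_filter_univ k).mp hk (hαs k hks)
  obtain ⟨d, ⟨j, hj⟩, hds, hda, hdc⟩ := exists_descent_direction c ha (not_le.mp hs)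
  obtain ⟨θ, hθ, hα', k, hk, hαk⟩ := exists_nonneg_add_smul_eq_zero hα ⟨j, hj⟩
  have hks : k ∈ s := by_contra fun h => hk.ne (hds k h)
  obtain ⟨β, hβ, hβa, hβc, hβcard⟩ := ih (s.erase k) (erase_ssubset hks) (α + θ • d) hα'
    (fun i hi => by
      rcases eq_or_ne i k with rfl | hik
      · exact hαk
      · have his : i ∉ s := fun h => hi (mem_erase.mpr ⟨hik, h⟩)
        simp [hαs i his, hds i his])
  refine ⟨β, hβ, by rw [hβa, sum_add_smul_smul, hda, smul_zero, add_zero], ?_, hβcard⟩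
  calc ∑ k, β k • c k ≤ ∑ k, (α + θ • d) k • c k := hβc
    _ = ∑ k, α k • c k + θ • ∑ k, d k • c k := sum_add_smul_smul α d θ c
    _ ≤ ∑ k, α k • c k := by
      have := mul_nonpos_of_nonneg_of_nonpos hθ hdc
      rw [smul_eq_mul]; linarith

end BasicSolution

section Reweighting

variable {ι T E F : Type*} [Fintype ι] [Fintype T] [AddCommGroup E] [Module ℝ E]
  [AddCommGroup F] [Module ℝ F] [FiniteDimensional ℝ F]

theorem card_support_prod_eq_sum (β : ι × T → ℝ) :
    #{k | β k ≠ 0} = ∑ i, #{t | β (i, t) ≠ 0} := by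
  classical
  simp only [card_filter, Fintype.sum_prod_type]

theorem exists_reweighting_card_support_le (π : E →ₗ[ℝ] F) (φ : E →ₗ[ℝ] ℝ) (p : ι → T → E)
    {μ : ι → T → ℝ} (hμ0 : ∀ i t, 0 ≤ μ i t) (hμ1 : ∀ i, ∑ t, μ i t = 1) :
    ∃ ν : ι → T → ℝ, (∀ i t, 0 ≤ ν i t) ∧ (∀ i, ∑ t, ν i t = 1) ∧
      π (∑ i, ∑ t, ν i t • p i t) = π (∑ i, ∑ t, μ i t • p i t) ∧
      φ (∑ i, ∑ t, ν i t • p i t) ≤ φ (∑ i, ∑ t, μ i t • p i t) ∧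
      ∑ i, #{t | ν i t ≠ 0} ≤ Fintype.card ι + finrank ℝ F := by
  classical
  -- the row-sum constraints are encoded by the first component of each column
  let a : ι × T → (ι → ℝ) × F := fun k => (Pi.single k.1 1, π (p k.1 k.2))
  have ha : ∀ β : ι × T → ℝ,
      ∑ k, β k • a k = (fun i => ∑ t, β (i, t), π (∑ i, ∑ t, β (i, t) • p i t)) := by
    intro β
    ext i
    · simp [a, Prod.fst_sum, Finset.sum_apply, Pi.single_apply, Fintype.sum_prod_type]
    · simp [a, Prod.snd_sum, Fintype.sum_prod_type, map_sum]
  have hc : ∀ β : ι × T → ℝ, ∑ k, β k • φ (p k.1 k.2) = φ (∑ i, ∑ t, β (i, t) • p i t) := by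
    intro β
    simp [Fintype.sum_prod_type, map_sum]
  have hpointed : ∀ d : ι × T → ℝ, 0 ≤ d → ∑ k, d k • a k = 0 → d = 0 := by
    intro d hd hda
    funext ⟨i, t⟩
    have hrow : ∑ t, d (i, t) = 0 := congrFun (congrArg Prod.fst ((ha d).symm.trans hda)) i
    exact (sum_eq_zero_iff_of_nonneg fun t _ => hd (i, t)).mp hrow t (mem_univ t)
  obtain ⟨β, hβ0, hβa, hβc, hβcard⟩ := exists_nonneg_sum_smul_eq_of_card_support_le_finrank
    (fun k => φ (p k.1 k.2)) hpointed (α := Function.uncurry μ) fun k => hμ0 k.1 k.2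
  rw [ha, ha] at hβa
  rw [hc, hc] at hβc
  refine ⟨Function.curry β, fun i t => hβ0 (i, t), fun i => ?_, congrArg Prod.snd hβa, hβc, ?_⟩
  · simpa [hμ1] using congrFun (congrArg Prod.fst hβa) i
  · rw [Module.finrank_prod, Module.finrank_fintype_fun_eq_card, card_support_prod_eq_sum] at hβcard
    exact hβcard

end Reweighting

theorem sum_smul_mem_convHullK {T E : Type*} [Fintype T] [AddCommGroup E] [Module ℝ E]
    {S : Set E} {μ : T → ℝ} {p : T → E} (hμ0 : ∀ t, 0 ≤ μ t) (hμ1 : ∑ t, μ t = 1)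
    (hp : ∀ t, p t ∈ S) : ∑ t, μ t • p t ∈ convHullK #{t | μ t ≠ 0} S := by
  classical
  set u : Finset T := {t | μ t ≠ 0}
  refine ⟨fun j => p (u.equivFin.symm j), fun j => μ (u.equivFin.symm j), fun j => hp _,
    fun j => hμ0 _, ?_, ?_⟩
  · rw [u.equivFin.symm.sum_comp (fun t => μ t), sum_coe_sort, sum_filter_ne_zero, hμ1]
  · rw [u.equivFin.symm.sum_comp (fun t => μ t • p t), sum_coe_sort u (fun t => μ t • p t),
      sum_filter_of_ne fun t _ ht => left_ne_zero_of_smul ht]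

theorem le_of_sum_le_of_one_le {ι : Type*} [Fintype ι] {f : ι → ℕ} {K : ℕ} (hf : ∀ i, 1 ≤ f i)
    (hsum : ∑ i, f i ≤ Fintype.card ι + K) (i : ι) : f i ≤ K + 1 := by
  have hsplit : ∑ j, f j = ∑ j, (f j - 1) + Fintype.card ι := by
    rw [← card_univ, card_eq_sum_ones, ← sum_add_distrib]
    exact sum_congr rfl fun j _ => (Nat.sub_add_cancel (hf j)).symm
  have := single_le_sum (fun j _ => Nat.zero_le (f j - 1)) (mem_univ i)
  omega

/-- Corollary of the refined Shapley–Folkman lemma: equality in the first `m-1`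
coordinates and inequality in the last coordinate. -/
theorem refined_shapley_folkman_half (m n : ℕ) (hm : 0 < m)
    (S : Fin n → Set (Fin m → ℝ)) (z : Fin m → ℝ)
    (hz : z ∈ convexHull ℝ (minkSum S)) :
    ∃ (ks : Fin n → ℕ) (z' : Fin n → (Fin m → ℝ)),
      (∀ i, 1 ≤ ks i ∧ ks i ≤ m) ∧ (∑ i, ks i) ≤ m - 1 + n ∧
      (∀ i, z' i ∈ convHullK (ks i) (S i)) ∧
      (∀ s : Fin m, (s : ℕ) < m - 1 → z s = ∑ i, z' i s) ∧
      (∑ i, z' i ⟨m - 1, Nat.sub_lt hm Nat.one_pos⟩) ≤ z ⟨m - 1, Nat.sub_lt hm Nat.one_pos⟩ := by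
  obtain ⟨T, _, c, x, hc0, hc1, hx, hcx⟩ := mem_convexHull_iff_exists_fintype.mp hz
  choose y hyS hxy using hx
  have hz_eq : z = ∑ i, ∑ t, c t • y t i := by
    simp_rw [← hcx, hxy, smul_sum]
    exact sum_comm
  let π : (Fin m → ℝ) →ₗ[ℝ] Fin (m - 1) → ℝ := LinearMap.funLeft ℝ ℝ (Fin.castLE (m.sub_le 1))
  obtain ⟨ν, hν0, hν1, hνπ, hνlast, hνcard⟩ := exists_reweighting_card_support_le π
    (LinearMap.proj ⟨m - 1, Nat.sub_lt hm Nat.one_pos⟩) (fun i t => y t i) (fun _ t => hc0 t)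
    fun _ => hc1
  rw [Module.finrank_fin_fun] at hνcard
  have hks : ∀ i, 1 ≤ #{t | ν i t ≠ 0} := fun i => card_pos.mpr <| by
    obtain ⟨t, -, ht⟩ := exists_ne_zero_of_sum_ne_zero ((hν1 i).trans_ne one_ne_zero)
    exact ⟨t, (mem_filter_univ t).mpr ht⟩
  refine ⟨fun i => #{t | ν i t ≠ 0}, fun i => ∑ t, ν i t • y t i,
    fun i => ⟨hks i, (le_of_sum_le_of_one_le hks hνcard i).trans_eq (Nat.sub_add_cancel hm)⟩,
    by simpa [add_comm] using hνcard, fun i => sum_smul_mem_convHullK (hν0 i) (hν1 i) (hyS · i),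
    fun s hs => ?_, ?_⟩
  · rw [hz_eq, ← Finset.sum_apply]
    exact (congrFun hνπ ⟨s, hs⟩).symm
  · rw [hz_eq, ← Finset.sum_apply]
    exact hνlast
end

section
/- For any proper function f : ℝ^n → ℝ ∪ {+∞}, the (n+1)-th nonconvexity of f equals its nonconvexity: ρ^{n+1}(f) = ρ(f). -/
/-- The `k`-th nonconvexity `ρᵏ(f)` of a function `f : E → ℝ ∪ {+∞}` (encoded with
values in `EReal`): the supremum of `f(Σ αⱼ xʲ) − Σ αⱼ f(xʲ)` over all convex
combinations of `k` points of the domain of `f`. -/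
noncomputable def rhoK {E : Type*} [AddCommMonoid E] [Module ℝ E] (k : ℕ)
    (f : E → EReal) : EReal :=
  sSup {d : EReal | ∃ (x : Fin k → E) (α : Fin k → ℝ),
    (∀ j, f (x j) ≠ ⊤) ∧ (∀ j, 0 ≤ α j) ∧ (∑ j, α j) = 1 ∧
    d = f (∑ j, α j • x j) - ∑ j, (α j : EReal) * f (x j)}

/-- The nonconvexity `ρ(f)` of `f`: the same supremum over all finite convex
combinations of points of the domain of `f`. -/
noncomputable def rho {E : Type*} [AddCommMonoid E] [Module ℝ E] (f : E → EReal) : EReal :=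
  ⨆ k : ℕ, rhoK k f

/-!
Carathéodory's argument, run with a cost: if more than `n + 1` points of `ℝⁿ` carry a convex
combination, they are affinely dependent, and moving the weights along an affine relation `δ`
(signed so that it does not decrease `∑ δⱼ f(xʲ)`) until the first weight hits zero keeps the
barycenter and the total mass, and does not decrease `f(Σ αⱼ xʲ) − Σ αⱼ f(xʲ)`. Hence
`ρᵏ⁺¹(f) ≤ ρᵏ(f)` for `k ≥ n + 1`, while `ρᵏ(f) ≤ ρᵏ⁺¹(f)` always (add a point of weight zero).
-/

open Finset Module

@[norm_cast]
theorem EReal.coe_finset_sum {ι : Type*} (s : Finset ι) (a : ι → ℝ) :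
    ((∑ i ∈ s, a i : ℝ) : EReal) = ∑ i ∈ s, (a i : EReal) :=
  map_sum (⟨⟨(↑), EReal.coe_zero⟩, EReal.coe_add⟩ : ℝ →+ EReal) a s

section Caratheodory

variable {ι E : Type*} [Fintype ι] [AddCommGroup E] [Module ℝ E]

theorem not_affineIndependent_of_finrank_succ_lt_card [FiniteDimensional ℝ E] {x : ι → E}
    (h : finrank ℝ E + 1 < Fintype.card ι) : ¬AffineIndependent ℝ x := fun hx =>
  have := (vectorSpan ℝ (Set.range x)).finrank_le
  h.not_ge (hx.card_le_finrank_succ.trans (by omega))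

theorem exists_affine_relation_of_not_affineIndependent {x : ι → E}
    (hx : ¬AffineIndependent ℝ x) (g : ι → ℝ) :
    ∃ δ : ι → ℝ, δ ≠ 0 ∧ ∑ i, δ i = 0 ∧ ∑ i, δ i • x i = 0 ∧ 0 ≤ ∑ i, δ i * g i := by
  rw [affineIndependent_iff_of_fintype] at hx
  push Not at hx
  obtain ⟨w, hw, hwx, i, hi⟩ := hx
  rw [weightedVSub_eq_linear_combination _ hw] at hwx
  have hw0 : w ≠ 0 := fun h => hi (congrFun h i)
  rcases le_total 0 (∑ i, w i * g i) with hg | hg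
  · exact ⟨w, hw0, hw, hwx, hg⟩
  · refine ⟨-w, neg_ne_zero.2 hw0, ?_, ?_, ?_⟩ <;>
      simp only [Pi.neg_apply, neg_smul, neg_mul, sum_neg_distrib, hw, hwx, neg_zero,
        neg_nonneg, hg]

theorem exists_pos_of_sum_eq_zero {δ : ι → ℝ} (hδ : δ ≠ 0) (hsum : ∑ i, δ i = 0) :
    ∃ i, 0 < δ i := by
  by_contra! hle
  exact hδ (funext fun i => (sum_eq_zero_iff_of_nonpos fun j _ => hle j).1 hsum i (mem_univ i))

theorem exists_sub_mul_nonneg_eq_zero {α δ : ι → ℝ} (hα : ∀ i, 0 ≤ α i) (hδ : δ ≠ 0)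
    (hsum : ∑ i, δ i = 0) :
    ∃ t : ℝ, 0 ≤ t ∧ (∀ i, 0 ≤ α i - t * δ i) ∧ ∃ i, α i - t * δ i = 0 := by
  obtain ⟨i, hi⟩ := exists_pos_of_sum_eq_zero hδ hsum
  obtain ⟨i₀, hi₀, hmin⟩ :=
    exists_min_image {i | 0 < δ i} (fun i => α i / δ i) ⟨i, mem_filter.2 ⟨mem_univ i, hi⟩⟩
  have hδi₀ : 0 < δ i₀ := (mem_filter.1 hi₀).2
  refine ⟨α i₀ / δ i₀, div_nonneg (hα i₀) hδi₀.le, fun j => ?_, i₀, by field_simp; ring⟩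
  rcases le_or_gt (δ j) 0 with hj | hj
  · nlinarith [hα j, div_nonneg (hα i₀) hδi₀.le]
  · have := hmin j (mem_filter.2 ⟨mem_univ j, hj⟩)
    rw [le_div_iff₀ hj] at this
    linarith

theorem exists_reweighting_with_zero_of_not_affineIndependent {x : ι → E}
    (hx : ¬AffineIndependent ℝ x) (g α : ι → ℝ) (hα : ∀ i, 0 ≤ α i) :
    ∃ β : ι → ℝ, (∀ i, 0 ≤ β i) ∧ (∃ i, β i = 0) ∧ ∑ i, β i = ∑ i, α i ∧
      ∑ i, β i • x i = ∑ i, α i • x i ∧ ∑ i, β i * g i ≤ ∑ i, α i * g i := by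
  obtain ⟨δ, hδ, hδsum, hδx, hδg⟩ := exists_affine_relation_of_not_affineIndependent hx g
  obtain ⟨t, ht, hβ, hβ0⟩ := exists_sub_mul_nonneg_eq_zero hα hδ hδsum
  refine ⟨fun i => α i - t * δ i, hβ, hβ0, ?_, ?_, ?_⟩
  · simp only [sum_sub_distrib, ← mul_sum, hδsum, mul_zero, sub_zero]
  · simp only [sub_smul, mul_smul, sum_sub_distrib, ← smul_sum, hδx, smul_zero, sub_zero]
  · simp only [sub_mul, mul_assoc, sum_sub_distrib, ← mul_sum]
    nlinarith

end Caratheodory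

theorem Fin.sum_succAbove_of_eq_zero {M : Type*} [AddCommMonoid M] {k : ℕ}
    {f : Fin (k + 1) → M} {j : Fin (k + 1)} (hj : f j = 0) :
    ∑ i, f (j.succAbove i) = ∑ i, f i := by
  rw [Fin.sum_univ_succAbove f j, hj, zero_add]

section Nonconvexity

variable {E : Type*} [AddCommGroup E] [Module ℝ E] {f : E → EReal}

theorem le_rhoK {k : ℕ} (x : Fin k → E) (α : Fin k → ℝ) (hx : ∀ j, f (x j) ≠ ⊤)
    (hα : ∀ j, 0 ≤ α j) (hα1 : ∑ j, α j = 1) :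
    f (∑ j, α j • x j) - ∑ j, (α j : EReal) * f (x j) ≤ rhoK k f :=
  le_sSup ⟨x, α, hx, hα, hα1, rfl⟩

theorem rhoK_le_rhoK_succ (hf : ∃ x, f x ≠ ⊤) (k : ℕ) : rhoK k f ≤ rhoK (k + 1) f := by
  obtain ⟨x₀, hx₀⟩ := hf
  refine sSup_le ?_
  rintro _ ⟨x, α, hx, hα, hα1, rfl⟩
  convert le_rhoK (Fin.cons x₀ x) (Fin.cons 0 α) (Fin.cases hx₀ hx) (Fin.cases le_rfl hα)
    (by rw [Fin.sum_cons, hα1, zero_add]) using 2 <;>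
    simp only [Fin.sum_univ_succ, Fin.cons_zero, Fin.cons_succ, zero_smul, EReal.coe_zero,
      zero_mul, zero_add]

theorem rhoK_monotone (hf : ∃ x, f x ≠ ⊤) : Monotone fun k => rhoK k f :=
  monotone_nat_of_le_succ (rhoK_le_rhoK_succ hf)

theorem rhoK_succ_le_rhoK [FiniteDimensional ℝ E] (hf : ∀ x, f x ≠ ⊥) {k : ℕ}
    (hk : finrank ℝ E + 1 ≤ k) : rhoK (k + 1) f ≤ rhoK k f := by
  refine sSup_le ?_
  rintro _ ⟨x, α, hx, hα, hα1, rfl⟩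
  set g : Fin (k + 1) → ℝ := fun j => (f (x j)).toReal
  have hfg : ∀ j, f (x j) = g j := fun j => (EReal.coe_toReal (hx j) (hf _)).symm
  have hdep : ¬AffineIndependent ℝ x :=
    not_affineIndependent_of_finrank_succ_lt_card (by rw [Fintype.card_fin]; omega)
  obtain ⟨β, hβ, ⟨j₀, hj₀⟩, hβ1, hβx, hβg⟩ :=
    exists_reweighting_with_zero_of_not_affineIndependent hdep g α hα
  have hcost : ∑ j, (α j : EReal) * f (x j) = ↑(∑ j, α j * g j) := by
    simp only [hfg, ← EReal.coe_mul, EReal.coe_finset_sum]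
  -- `β` vanishes at `j₀`, so it is a combination of the remaining `k` points
  have hγ1 : ∑ i, β (j₀.succAbove i) = 1 := by
    rw [Fin.sum_succAbove_of_eq_zero hj₀, hβ1, hα1]
  have hγx : ∑ i, β (j₀.succAbove i) • x (j₀.succAbove i) = ∑ j, β j • x j :=
    Fin.sum_succAbove_of_eq_zero (f := fun j => β j • x j) (by simp only [hj₀, zero_smul])
  have hγg :
      ∑ i, (β (j₀.succAbove i) : EReal) * f (x (j₀.succAbove i)) = ↑(∑ j, β j * g j) := by
    rw [← Fin.sum_succAbove_of_eq_zero (f := fun j => β j * g j) (j := j₀)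
      (by simp only [hj₀, zero_mul])]
    simp only [hfg, ← EReal.coe_mul, EReal.coe_finset_sum]
  calc f (∑ j, α j • x j) - ∑ j, (α j : EReal) * f (x j)
      = f (∑ j, β j • x j) - ↑(∑ j, α j * g j) := by rw [hβx, hcost]
    _ ≤ f (∑ j, β j • x j) - ↑(∑ j, β j * g j) :=
        EReal.sub_le_sub le_rfl (EReal.coe_le_coe_iff.2 hβg)
    _ = f (∑ i, β (j₀.succAbove i) • x (j₀.succAbove i))
          - ∑ i, (β (j₀.succAbove i) : EReal) * f (x (j₀.succAbove i)) := by rw [hγx, hγg]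
    _ ≤ rhoK k f := le_rhoK _ _ (fun i => hx _) (fun i => hβ _) hγ1

theorem rhoK_le_rhoK_finrank_succ [FiniteDimensional ℝ E] (hbot : ∀ x, f x ≠ ⊥)
    (hproper : ∃ x, f x ≠ ⊤) (k : ℕ) : rhoK k f ≤ rhoK (finrank ℝ E + 1) f := by
  rcases le_total k (finrank ℝ E + 1) with hk | hk
  · exact rhoK_monotone hproper hk
  · induction k, hk using Nat.le_induction with
    | base => exact le_rfl
    | succ k hk ih => exact (rhoK_succ_le_rhoK hbot (by omega)).trans ih

end Nonconvexity

/-- For a proper function `f : ℝⁿ → ℝ ∪ {+∞}`, the `(n+1)`-th nonconvexity equals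
the nonconvexity: `ρ^{n+1}(f) = ρ(f)`. -/
theorem rhoK_succ_eq_rho (n : ℕ) (f : (Fin n → ℝ) → EReal)
    (hbot : ∀ x, f x ≠ ⊥) (hproper : ∃ x, f x ≠ ⊤) :
    rhoK (n + 1) f = rho f :=
  le_antisymm (le_iSup (fun k => rhoK k f) (n + 1)) <| iSup_le fun k => by
    simpa only [finrank_fin_fun] using rhoK_le_rhoK_finrank_succ hbot hproper k
end

section
/- Let f : ℝ^n → ℝ ∪ {+∞} be a proper lower semi-continuous function that is bounded below by some affine function, and for an integer k ≥ 1 let f^{(k)} be the function whose epigraph is the closure of the k-th convex hull of the epigraph of f, i.e., epi f^{(k)} = cl conv_k (epi f). Then ρ^k(f) = sup_x { f(x) − f^{(k)}(x) }, where (+∞) − (+∞) is interpreted as 0. -/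
namespace EReal

lemma coe_finset_sum_s5 {ι : Type*} (s : Finset ι) (g : ι → ℝ) :
    ((∑ j ∈ s, g j : ℝ) : EReal) = ∑ j ∈ s, (g j : EReal) :=
  map_sum (⟨⟨((↑) : ℝ → EReal), coe_zero⟩, coe_add⟩ : ℝ →+ EReal) g s

lemma sub_le_of_forall_coe_sub_le {a b z : EReal}
    (h : ∀ c t : ℝ, (c : EReal) < a → b < t → (c : EReal) - t ≤ z) : a - b ≤ z := by
  rw [sub_eq_add_neg]
  refine add_le_of_forall_lt fun a' ha' b' hb' => ?_
  induction a' using EReal.rec with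
  | bot => simp
  | top => exact absurd ha' not_top_lt
  | coe c =>
    induction b' using EReal.rec with
    | bot => simp
    | top => exact absurd hb' not_top_lt
    | coe s =>
      simpa [sub_eq_add_neg] using h c (-s) ha' (by simpa using EReal.lt_neg_comm.mp hb')

end EReal

section

variable {E : Type*} [AddCommMonoid E] [Module ℝ E]

def epigraph (f : E → EReal) : Set (E × ℝ) :=
  {q | f q.1 ≤ q.2}

lemma sub_le_rhoK_of_mem_convHullK {k : ℕ} {f : E → EReal} {p : E × ℝ}
    (hp : p ∈ convHullK k (epigraph f)) : f p.1 - p.2 ≤ rhoK k f := by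
  obtain ⟨v, α, hv, hα, hsum, rfl⟩ := hp
  have hfin : ∀ j, f (v j).1 ≠ ⊤ := fun j => ((hv j).trans_lt (EReal.coe_lt_top _)).ne
  have hle : ∑ j, (α j : EReal) * f (v j).1 ≤ ((∑ j, α j • v j).2 : EReal) := by
    rw [Prod.snd_sum, EReal.coe_finset_sum_s5]
    refine Finset.sum_le_sum fun j _ => ?_
    rw [Prod.smul_snd, smul_eq_mul, EReal.coe_mul]
    exact mul_le_mul_of_nonneg_left (hv j) (EReal.coe_nonneg.2 (hα j))
  calc f (∑ j, α j • v j).1 - (∑ j, α j • v j).2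
      ≤ f (∑ j, α j • (v j).1) - ∑ j, (α j : EReal) * f (v j).1 := by
        rw [Prod.fst_sum]
        exact EReal.sub_le_sub le_rfl hle
    _ ≤ rhoK k f := le_sSup ⟨fun j => (v j).1, α, hfin, hα, hsum, rfl⟩

lemma coe_sub_le_rhoK_of_mem_closure [TopologicalSpace E] {k : ℕ} {f : E → EReal} {x : E}
    (hf : LowerSemicontinuousAt f x) {c t t' : ℝ}
    (hxt : (x, t) ∈ closure (convHullK k (epigraph f))) (hc : c < f x) (ht : t < t') :
    (c : EReal) - t' ≤ rhoK k f := by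
  obtain ⟨p, hp, hcp, hpt⟩ := ((mem_closure_iff_frequently.1 hxt).and_eventually
    ((hf c hc).prod_nhds (gt_mem_nhds ht))).exists
  calc (c : EReal) - t' ≤ f p.1 - p.2 := EReal.sub_le_sub hcp.le (EReal.coe_le_coe hpt.le)
    _ ≤ rhoK k f := sub_le_rhoK_of_mem_convHullK hp

lemma le_sum_of_convHullK_subset_epigraph {k : ℕ} {f g : E → EReal}
    (h : convHullK k (epigraph f) ⊆ epigraph g) {v : Fin k → E} {α : Fin k → ℝ}
    (hv : ∀ j, f (v j) ≠ ⊤) (hbot : ∀ j, f (v j) ≠ ⊥) (hα : ∀ j, 0 ≤ α j)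
    (hsum : ∑ j, α j = 1) :
    g (∑ j, α j • v j) ≤ ∑ j, (α j : EReal) * f (v j) := by
  have hmem : (∑ j, α j • v j, ∑ j, α j * (f (v j)).toReal) ∈ convHullK k (epigraph f) :=
    ⟨fun j => (v j, (f (v j)).toReal), α, fun j => (EReal.coe_toReal (hv j) (hbot j)).ge,
      hα, hsum, by ext <;> simp [Prod.fst_sum, Prod.snd_sum]⟩
  simpa [epigraph, EReal.coe_finset_sum_s5, EReal.coe_toReal (hv _) (hbot _)] using h hmem

lemma rhoK_nonneg {k : ℕ} (hk : 1 ≤ k) {f : E → EReal} {x₀ : E} (htop : f x₀ ≠ ⊤)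
    (hbot : f x₀ ≠ ⊥) : 0 ≤ rhoK k f := by
  let α : Fin k → ℝ := Pi.single ⟨0, hk⟩ 1
  have hα : ∀ j, 0 ≤ α j := fun j => by simp only [α, Pi.single_apply]; positivity
  refine le_sSup_of_le ⟨fun _ => x₀, α, fun _ => htop, hα, by simp [α], rfl⟩ ?_
  simp [α, Pi.single_apply, apply_ite ((↑) : ℝ → EReal), ite_mul, EReal.sub_self htop hbot]

end

theorem rhoK_eq_sup_sub_general (d k : ℕ) (hk : 1 ≤ k) (f fk : (Fin d → ℝ) → EReal)
    (hbot : ∀ x, f x ≠ ⊥) (hproper : ∃ x, f x ≠ ⊤)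
    (hlsc : LowerSemicontinuous f)
    (hepi : {q : (Fin d → ℝ) × ℝ | fk q.1 ≤ (q.2 : EReal)} =
      closure (convHullK k {q : (Fin d → ℝ) × ℝ | f q.1 ≤ (q.2 : EReal)})) :
    rhoK k f = sSup {e : EReal | ∃ x : Fin d → ℝ,
      e = if f x = ⊤ ∧ fk x = ⊤ then 0 else f x - fk x} := by
  change epigraph fk = closure (convHullK k (epigraph f)) at hepi
  apply le_antisymm
  · refine sSup_le ?_
    rintro _ ⟨v, α, hv, hα, hsum, rfl⟩
    have hfk :=
      le_sum_of_convHullK_subset_epigraph (hepi ▸ subset_closure) hv (hbot <| v ·) hα hsum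
    refine le_sSup_of_le ⟨∑ j, α j • v j, rfl⟩ ((EReal.sub_le_sub le_rfl hfk).trans ?_)
    split_ifs with h
    · simp [h.1, h.2] -- `⊤ - ⊤ = ⊥` in `EReal`
    · rfl
  · refine sSup_le ?_
    rintro _ ⟨x, rfl⟩
    split_ifs
    · obtain ⟨x₀, hx₀⟩ := hproper
      exact rhoK_nonneg hk hx₀ (hbot x₀)
    · refine EReal.sub_le_of_forall_coe_sub_le fun c t hc ht => ?_
      obtain ⟨s, hfks, hst⟩ := EReal.exists_between_coe_real ht
      have hxs : (x, s) ∈ closure (convHullK k (epigraph f)) := hepi ▸ hfks.le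
      exact coe_sub_le_rhoK_of_mem_closure (hlsc x) hxs hc (EReal.coe_lt_coe_iff.1 hst)

/-- If `f` is proper, lower semicontinuous and bounded below by an affine function, and
`f⁽ᵏ⁾` is the function whose epigraph is the closure of the `k`-th convex hull of the
epigraph of `f`, then `ρᵏ(f) = sup_x (f(x) − f⁽ᵏ⁾(x))`, with `(+∞) − (+∞)` read as `0`. -/
theorem rhoK_eq_sup_sub (d k : ℕ) (hk : 1 ≤ k) (f fk : (Fin d → ℝ) → EReal)
    (hbot : ∀ x, f x ≠ ⊥) (hproper : ∃ x, f x ≠ ⊤)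
    (hlsc : LowerSemicontinuous f)
    (haff : ∃ (a : Fin d → ℝ) (β : ℝ), ∀ x, ((∑ s, a s * x s + β : ℝ) : EReal) ≤ f x)
    (hepi : {q : (Fin d → ℝ) × ℝ | fk q.1 ≤ (q.2 : EReal)} =
      closure (convHullK k {q : (Fin d → ℝ) × ℝ | f q.1 ≤ (q.2 : EReal)})) :
    rhoK k f = sSup {e : EReal | ∃ x : Fin d → ℝ,
      e = if f x = ⊤ ∧ fk x = ⊤ then 0 else f x - fk x} :=
  rhoK_eq_sup_sub_general d k hk f fk hbot hproper hlsc hepi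
end

section
/- Let f(x) = min_{s=1,...,n} x_s on the box {x ∈ ℝ^n : 0 ≤ x ≤ 1}. For any k points x^1,...,x^k in the box and weights α_j ≥ 0 with Σ_{j=1}^k α_j = 1, one has f(Σ_{j=1}^k α_j x^j) − Σ_{j=1}^k α_j f(x^j) ≤ ((k−1)/k)·(1 − Σ_{j=1}^k α_j f(x^j)) ≤ (k−1)/k. -/
/-!
Write `M j = min_s x j s` and `A = Σ αⱼ M j`. The deficits `αⱼ (1 - M j)` add up to `1 - A`, so
one of them, for `j₀` say, is at least `(1 - A) / k`. Evaluating the combination at a coordinate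
`s₀` where `x j₀` is minimal, every other point contributes at most its weight, so
`min_s Σ αⱼ x j s ≤ 1 - αⱼ₀ (1 - M j₀) ≤ 1 - (1 - A) / k`, which is the first inequality.
The second holds because `A ≥ 0`.
-/

open Finset

variable {ι σ : Type*} [Fintype ι]

lemma exists_sum_le_card_mul [Nonempty ι] (w : ι → ℝ) :
    ∃ j, ∑ i, w i ≤ Fintype.card ι * w j := by
  obtain ⟨j, hj⟩ := Finite.exists_max w
  exact ⟨j, by simpa using sum_le_card_nsmul univ w (w j) fun i _ => hj i⟩

lemma sum_mul_one_sub {α : ι → ℝ} (hαsum : ∑ i, α i = 1) (y : ι → ℝ) :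
    ∑ i, α i * (1 - y i) = 1 - ∑ i, α i * y i := by
  simp only [mul_sub, mul_one, sum_sub_distrib, hαsum]

lemma sum_mul_le_one_sub_mul {α y : ι → ℝ} (hα : ∀ i, 0 ≤ α i) (hαsum : ∑ i, α i = 1)
    (hy : ∀ i, y i ≤ 1) (j : ι) :
    ∑ i, α i * y i ≤ 1 - α j * (1 - y j) := by
  have : α j * (1 - y j) ≤ ∑ i, α i * (1 - y i) :=
    single_le_sum (fun i _ => mul_nonneg (hα i) (sub_nonneg.2 (hy i))) (mem_univ j)
  linarith [sum_mul_one_sub hαsum y]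

lemma ciInf_sum_mul_le [Finite σ] [Nonempty σ] {x : ι → σ → ℝ} (hx : ∀ i s, x i s ≤ 1)
    {α : ι → ℝ} (hα : ∀ i, 0 ≤ α i) (hαsum : ∑ i, α i = 1) (j : ι) :
    ⨅ s, ∑ i, α i * x i s ≤ 1 - α j * (1 - ⨅ s, x j s) := by
  obtain ⟨s₀, hs₀⟩ := exists_eq_ciInf_of_finite (f := x j)
  rw [← hs₀]
  exact (ciInf_le (Set.finite_range _).bddBelow s₀).trans
    (sum_mul_le_one_sub_mul hα hαsum (fun i => hx i s₀) j)

theorem ciInf_sum_mul_sub_sum_mul_ciInf_le [Nonempty ι] [Finite σ] [Nonempty σ]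
    {x : ι → σ → ℝ} (hx : ∀ i s, x i s ≤ 1)
    {α : ι → ℝ} (hα : ∀ i, 0 ≤ α i) (hαsum : ∑ i, α i = 1) :
    (⨅ s, ∑ i, α i * x i s) - ∑ i, α i * ⨅ s, x i s ≤
      ((Fintype.card ι : ℝ) - 1) / Fintype.card ι * (1 - ∑ i, α i * ⨅ s, x i s) := by
  set A := ∑ i, α i * ⨅ s, x i s
  have hk : (0 : ℝ) < Fintype.card ι := by exact_mod_cast Fintype.card_pos
  obtain ⟨j, hj⟩ := exists_sum_le_card_mul fun i => α i * (1 - ⨅ s, x i s)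
  rw [sum_mul_one_sub hαsum] at hj
  have hdeficit : (1 - A) / Fintype.card ι ≤ α j * (1 - ⨅ s, x j s) := by
    rw [div_le_iff₀ hk]
    linarith
  have hsplit : ((Fintype.card ι : ℝ) - 1) / Fintype.card ι * (1 - A) =
      (1 - A) - (1 - A) / Fintype.card ι := by
    field_simp
  linarith [ciInf_sum_mul_le hx hα hαsum j]

/-- For `f(x) = min_s x_s` on the box `0 ≤ x ≤ 1`, any convex combination of `k`
points satisfies
`f(Σ αⱼ xʲ) − Σ αⱼ f(xʲ) ≤ ((k−1)/k)(1 − Σ αⱼ f(xʲ)) ≤ (k−1)/k`. -/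
theorem min_combination_bound (n k : ℕ) (hn : 0 < n) (hk : 0 < k)
    (x : Fin k → Fin n → ℝ) (hx : ∀ j s, 0 ≤ x j s ∧ x j s ≤ 1)
    (α : Fin k → ℝ) (hα : ∀ j, 0 ≤ α j) (hαsum : ∑ j, α j = 1) :
    (⨅ s, ∑ j, α j * x j s) - (∑ j, α j * ⨅ s, x j s) ≤
      ((k : ℝ) - 1) / (k : ℝ) * (1 - ∑ j, α j * ⨅ s, x j s) ∧
    ((k : ℝ) - 1) / (k : ℝ) * (1 - ∑ j, α j * ⨅ s, x j s) ≤ ((k : ℝ) - 1) / (k : ℝ) := by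
  have : Nonempty (Fin n) := Fin.pos_iff_nonempty.mp hn
  have : Nonempty (Fin k) := Fin.pos_iff_nonempty.mp hk
  refine ⟨by simpa using ciInf_sum_mul_sub_sum_mul_ciInf_le (fun j s => (hx j s).2) hα hαsum, ?_⟩
  have hA : 0 ≤ ∑ j, α j * ⨅ s, x j s :=
    sum_nonneg fun j _ => mul_nonneg (hα j) (le_ciInf fun s => (hx j s).1)
  have hcoef : 0 ≤ ((k : ℝ) - 1) / k :=
    div_nonneg (sub_nonneg.2 (Nat.one_le_cast.2 hk)) k.cast_nonneg
  exact mul_le_of_le_one_right hcoef (sub_le_self 1 hA)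
end

section
/- Let g(x) = −log(max_{s=1,...,n} x_s) on {x ∈ ℝ^n : x ≥ 0, x ≠ 0}. For any k points x^1,...,x^k in this region and weights α_j > 0 with Σ_{j=1}^k α_j = 1, one has g(Σ_{j=1}^k α_j x^j) ≤ −Σ_{j=1}^k α_j log α_j + Σ_{j=1}^k α_j g(x^j) ≤ log k + Σ_{j=1}^k α_j g(x^j). -/
/-! With `M j = max_s xʲ_s` and `S = max_s Σ αⱼ xʲ_s`, every `αⱼ Mⱼ ≤ S`, since the
coordinate where `xʲ` attains its maximum already gives `S ≥ αⱼ Mⱼ`. Averaging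
`log αⱼ + log Mⱼ ≤ log S` with the weights `αⱼ` is the first inequality; the second
is Jensen's inequality for `log` at the points `1/αⱼ`, i.e. entropy is at most `log k`. -/

open Real Finset

section WeightedLog

variable {J : Type*} [Fintype J] {α : J → ℝ}

theorem sum_mul_log_le_log_of_le (hα : ∀ j, 0 ≤ α j) (hαsum : ∑ j, α j = 1)
    {a : J → ℝ} {S : ℝ} (ha : ∀ j, 0 < a j) (haS : ∀ j, a j ≤ S) :
    ∑ j, α j * log (a j) ≤ log S :=
  calc ∑ j, α j * log (a j) ≤ ∑ j, α j * log S :=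
        sum_le_sum fun j _ => mul_le_mul_of_nonneg_left (log_le_log (ha j) (haS j)) (hα j)
    _ = log S := by rw [← sum_mul, hαsum, one_mul]

theorem neg_sum_mul_log_le_log_card (hα : ∀ j, 0 < α j) (hαsum : ∑ j, α j = 1) :
    -∑ j, α j * log (α j) ≤ log (Fintype.card J) := by
  have jensen := strictConcaveOn_log_Ioi.concaveOn.le_map_sum (t := univ) (p := fun j => (α j)⁻¹)
    (fun j _ => (hα j).le) hαsum fun j _ => Set.mem_Ioi.mpr (inv_pos.mpr (hα j))
  have hcard : ∑ j, α j * (α j)⁻¹ = Fintype.card J := by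
    simp [fun j => mul_inv_cancel₀ (hα j).ne']
  simp only [smul_eq_mul, log_inv, mul_neg, sum_neg_distrib, hcard] at jensen
  exact jensen

end WeightedLog

section CoordinateMax

variable {ι : Type*} [Finite ι]

theorem ciSup_pos_of_nonneg_of_ne_zero {x : ι → ℝ} (hx : ∀ s, 0 ≤ x s) (hx₀ : x ≠ 0) :
    0 < ⨆ s, x s := by
  obtain ⟨s, hs⟩ := Function.ne_iff.mp hx₀
  exact ((hx s).lt_of_ne' hs).trans_le (le_ciSup (Finite.bddAbove_range x) s)

theorem mul_ciSup_le_ciSup_sum {J : Type*} [Fintype J] {α : J → ℝ} (hα : ∀ j, 0 ≤ α j)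
    {x : J → ι → ℝ} (hx : ∀ j s, 0 ≤ x j s) (j : J) :
    α j * ⨆ s, x j s ≤ ⨆ s, ∑ i, α i * x i s := by
  rw [Real.mul_iSup_of_nonneg (hα j)]
  exact ciSup_mono (Finite.bddAbove_range _) fun s =>
    single_le_sum (f := fun i => α i * x i s) (fun i _ => mul_nonneg (hα i) (hx i s)) (mem_univ j)

end CoordinateMax

theorem neg_log_max_combination_bound_general (n k : ℕ)
    (x : Fin k → Fin n → ℝ) (hx : ∀ j, (∀ s, 0 ≤ x j s) ∧ x j ≠ 0)
    (α : Fin k → ℝ) (hα : ∀ j, 0 < α j) (hαsum : ∑ j, α j = 1) :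
    -Real.log (⨆ s, ∑ j, α j * x j s) ≤
      -(∑ j, α j * Real.log (α j)) + ∑ j, α j * (-Real.log (⨆ s, x j s)) ∧
    -(∑ j, α j * Real.log (α j)) + ∑ j, α j * (-Real.log (⨆ s, x j s)) ≤
      Real.log k + ∑ j, α j * (-Real.log (⨆ s, x j s)) := by
  have hM : ∀ j, 0 < ⨆ s, x j s := fun j => ciSup_pos_of_nonneg_of_ne_zero (hx j).1 (hx j).2
  have hαM : ∑ j, α j * log (α j * ⨆ s, x j s) ≤ log (⨆ s, ∑ j, α j * x j s) :=
    sum_mul_log_le_log_of_le (fun j => (hα j).le) hαsum (fun j => mul_pos (hα j) (hM j))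
      (mul_ciSup_le_ciSup_sum (fun j => (hα j).le) fun j => (hx j).1)
  simp only [fun j => log_mul (hα j).ne' (hM j).ne', mul_add, sum_add_distrib] at hαM
  have hent := neg_sum_mul_log_le_log_card hα hαsum
  simp only [Fintype.card_fin, mul_neg, sum_neg_distrib] at hent ⊢
  constructor <;> linarith

/-- For `g(x) = −log(max_s x_s)` on `{x ≥ 0, x ≠ 0}`, any convex combination of `k`
points with strictly positive weights satisfies
`g(Σ αⱼ xʲ) ≤ −Σ αⱼ log αⱼ + Σ αⱼ g(xʲ) ≤ log k + Σ αⱼ g(xʲ)`. -/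
theorem neg_log_max_combination_bound (n k : ℕ) (hn : 0 < n) (hk : 0 < k)
    (x : Fin k → Fin n → ℝ) (hx : ∀ j, (∀ s, 0 ≤ x j s) ∧ x j ≠ 0)
    (α : Fin k → ℝ) (hα : ∀ j, 0 < α j) (hαsum : ∑ j, α j = 1) :
    -Real.log (⨆ s, ∑ j, α j * x j s) ≤
      -(∑ j, α j * Real.log (α j)) + ∑ j, α j * (-Real.log (⨆ s, x j s)) ∧
    -(∑ j, α j * Real.log (α j)) + ∑ j, α j * (-Real.log (⨆ s, x j s)) ≤
      Real.log k + ∑ j, α j * (-Real.log (⨆ s, x j s)) :=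
  neg_log_max_combination_bound_general n k x hx α hα hαsum
end

section
/- For 0 < σ ≤ 1 define H(x;σ) = Π_{s=1}^n (‖x‖₁ − x_s + σ)/(‖x‖₁ + σ) for x ∈ ℝ^n with x ≥ 0, where ‖x‖₁ = Σ_s x_s. Then for any vectors x and y in the region 0 ≤ x, y ≤ σ (componentwise), y ≤ x implies H(y;σ) ≥ H(x;σ). -/
/-! It suffices to lower one coordinate `x s` at a time. With the other coordinates frozen,
`log H` is, up to the constant `log (‖x‖₁ - x s + σ)`, a function of `S = ‖x‖₁` alone, with
derivative `(∑_{t ≠ s} x t / (S - x t + σ) - 1) / (S + σ)`. Since `x t ≤ σ`, every denominator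
`S - x t + σ` is at least `∑_{t ≠ s} x t`, so the derivative is nonpositive. -/

open Finset Function

section

variable {ι : Type*}

theorem sum_div_sub_add_le_one {T : Finset ι} {a : ι → ℝ} {σ S : ℝ}
    (ha : ∀ t ∈ T, 0 ≤ a t ∧ a t ≤ σ) (hS : ∑ t ∈ T, a t ≤ S) :
    ∑ t ∈ T, a t / (S - a t + σ) ≤ 1 := by
  set A := ∑ t ∈ T, a t
  rcases (sum_nonneg fun t ht => (ha t ht).1 : 0 ≤ A).eq_or_lt with hA | hA
  · have hzero : ∀ t ∈ T, a t = 0 :=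
      (sum_eq_zero_iff_of_nonneg fun t ht => (ha t ht).1).1 hA.symm
    rw [sum_eq_zero fun t ht => by rw [hzero t ht, zero_div]]
    exact zero_le_one
  calc ∑ t ∈ T, a t / (S - a t + σ)
      ≤ ∑ t ∈ T, a t / A := sum_le_sum fun t ht => by
        gcongr
        · exact (ha t ht).1
        · linarith [(ha t ht).2]
    _ = 1 := by rw [← sum_div, div_self hA.ne']

noncomputable def logHErase (T : Finset ι) (a : ι → ℝ) (σ S : ℝ) : ℝ :=
  ∑ t ∈ T, (Real.log (S - a t + σ) - Real.log (S + σ)) - Real.log (S + σ)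

theorem logHErase_congr {T : Finset ι} {a b : ι → ℝ} (h : ∀ t ∈ T, a t = b t) (σ : ℝ) :
    logHErase T a σ = logHErase T b σ := by
  funext S
  unfold logHErase
  congr 1
  exact sum_congr rfl fun t ht => by rw [h t ht]

theorem hasDerivAt_logHErase {T : Finset ι} {a : ι → ℝ} {σ S : ℝ} (hS : 0 < S + σ)
    (hT : ∀ t ∈ T, 0 < S - a t + σ) :
    HasDerivAt (logHErase T a σ)
      (∑ t ∈ T, ((S - a t + σ)⁻¹ - (S + σ)⁻¹) - (S + σ)⁻¹) S := by
  have hD : HasDerivAt (fun S => Real.log (S + σ)) (S + σ)⁻¹ S := by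
    simpa using ((hasDerivAt_id S).add_const σ).log hS.ne'
  refine (HasDerivAt.fun_sum fun t ht => ?_).sub hD
  refine HasDerivAt.sub ?_ hD
  simpa using (((hasDerivAt_id S).sub_const (a t)).add_const σ).log (hT t ht).ne'

theorem antitoneOn_logHErase {T : Finset ι} {a : ι → ℝ} {σ : ℝ} (hσ : 0 < σ)
    (ha : ∀ t ∈ T, 0 ≤ a t ∧ a t ≤ σ) :
    AntitoneOn (logHErase T a σ) (Set.Ici (∑ t ∈ T, a t)) := by
  have hpos : ∀ S ∈ Set.Ici (∑ t ∈ T, a t), 0 < S + σ ∧ ∀ t ∈ T, 0 < S - a t + σ := by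
    intro S hS
    have hat : ∀ t ∈ T, a t ≤ S := fun t ht =>
      (single_le_sum (fun t ht => (ha t ht).1) ht).trans (Set.mem_Ici.1 hS)
    exact ⟨by linarith [(sum_nonneg fun t ht => (ha t ht).1).trans (Set.mem_Ici.1 hS)],
      fun t ht => by linarith [hat t ht]⟩
  refine antitoneOn_of_hasDerivWithinAt_nonpos (convex_Ici _)
    (fun S hS => (hasDerivAt_logHErase (hpos S hS).1 (hpos S hS).2).continuousAt.continuousWithinAt)
    (fun S hS => (hasDerivAt_logHErase (hpos S (interior_subset hS)).1
      (hpos S (interior_subset hS)).2).hasDerivWithinAt) fun S hS => ?_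
  obtain ⟨hSσ, hT⟩ := hpos S (interior_subset hS)
  have hterm : ∀ t ∈ T, (S - a t + σ)⁻¹ - (S + σ)⁻¹ = a t / (S - a t + σ) / (S + σ) :=
    fun t ht => by field_simp [(hT t ht).ne']; ring
  rw [sum_congr rfl hterm, ← sum_div, sub_nonpos, ← one_div]
  gcongr
  exact sum_div_sub_add_le_one ha (interior_subset hS)

variable [Fintype ι]

theorem antitoneOn_of_le_update [DecidableEq ι] {α β : Type*} [Preorder α] [Preorder β]
    {l u : ι → α} {F : (ι → α) → β}
    (h : ∀ z ∈ Set.Icc l u, ∀ s b, l s ≤ b → b ≤ z s → F z ≤ F (update z s b)) :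
    AntitoneOn F (Set.Icc l u) := by
  intro y hy x hx hyx
  suffices ∀ T : Finset ι, F x ≤ F (T.piecewise y x) by simpa using this univ
  intro T
  induction T using Finset.induction_on with
  | empty => simp
  | insert a T haT ih =>
    rw [piecewise_insert]
    refine ih.trans (h _ (piecewise_mem_Icc_of_mem_of_mem _ hy hx) a _ (hy.1 a) ?_)
    rw [piecewise_eq_of_notMem _ _ _ haT]
    exact hyx a

noncomputable def H (σ : ℝ) (x : ι → ℝ) : ℝ :=
  ∏ s, ((∑ t, x t) - x s + σ) / ((∑ t, x t) + σ)

theorem sum_sub_add_pos_of_nonneg {x : ι → ℝ} (hx : 0 ≤ x) {σ : ℝ} (hσ : 0 < σ) (s : ι) :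
    0 < (∑ t, x t) - x s + σ := by
  linarith [single_le_sum (fun t _ => hx t) (mem_univ s)]

theorem sum_add_pos_of_nonneg {x : ι → ℝ} (hx : 0 ≤ x) {σ : ℝ} (hσ : 0 < σ) :
    0 < (∑ t, x t) + σ := by
  linarith [sum_nonneg fun t (_ : t ∈ univ) => hx t]

theorem H_pos {σ : ℝ} (hσ : 0 < σ) {x : ι → ℝ} (hx : 0 ≤ x) : 0 < H σ x :=
  prod_pos fun s _ => div_pos (sum_sub_add_pos_of_nonneg hx hσ s) (sum_add_pos_of_nonneg hx hσ)

theorem log_H_eq [DecidableEq ι] {σ : ℝ} (hσ : 0 < σ) {x : ι → ℝ} (hx : 0 ≤ x) (s : ι) :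
    Real.log (H σ x) =
      Real.log (∑ t ∈ univ.erase s, x t + σ) + logHErase (univ.erase s) x σ (∑ t, x t) := by
  have hSσ := sum_add_pos_of_nonneg hx hσ
  have hsplit := add_sum_erase univ
    (fun t => Real.log ((∑ u, x u) - x t + σ) - Real.log ((∑ u, x u) + σ)) (mem_univ s)
  rw [H, Real.log_prod fun t _ => (div_pos (sum_sub_add_pos_of_nonneg hx hσ t) hSσ).ne']
  simp only [Real.log_div (sum_sub_add_pos_of_nonneg hx hσ _).ne' hSσ.ne']
  rw [← hsplit, logHErase, sum_erase_eq_sub (f := x) (mem_univ s)]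
  ring

theorem H_le_H_update [DecidableEq ι] {σ : ℝ} (hσ : 0 < σ) {x : ι → ℝ}
    (hx : x ∈ Set.Icc 0 fun _ => σ) (s : ι) {b : ℝ} (hb : 0 ≤ b) (hbx : b ≤ x s) :
    H σ x ≤ H σ (update x s b) := by
  set y := update x s b
  have hy : 0 ≤ y := le_update_iff.2 ⟨hb, fun t _ => hx.1 t⟩
  have hyx : ∀ t ∈ univ.erase s, y t = x t := fun t ht => update_of_ne (ne_of_mem_erase ht) _ _
  have hsum : ∀ z : ι → ℝ, ∑ t, z t = z s + ∑ t ∈ univ.erase s, z t := fun z =>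
    (add_sum_erase _ _ (mem_univ s)).symm
  rw [← Real.log_le_log_iff (H_pos hσ hx.1) (H_pos hσ hy), log_H_eq hσ hx.1 s, log_H_eq hσ hy s,
    sum_congr rfl hyx, logHErase_congr hyx]
  gcongr
  have hR := antitoneOn_logHErase (T := univ.erase s) (a := x) hσ fun t _ => ⟨hx.1 t, hx.2 t⟩
  refine hR ?_ ?_ ?_ <;>
    simp only [Set.mem_Ici, hsum x, hsum y, sum_congr rfl hyx, y, update_self] <;>
    linarith [hx.1 s]

theorem antitoneOn_H {σ : ℝ} (hσ : 0 < σ) :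
    AntitoneOn (H σ) (Set.Icc (0 : ι → ℝ) fun _ => σ) := by
  classical
  exact antitoneOn_of_le_update fun x hx s _ hb hbx => H_le_H_update hσ hx s hb hbx

end

theorem H_antitone_general (n : ℕ) (σ : ℝ) (hσ0 : 0 < σ)
    (x y : Fin n → ℝ) (hx : ∀ s, 0 ≤ x s ∧ x s ≤ σ) (hy : ∀ s, 0 ≤ y s ∧ y s ≤ σ)
    (hyx : ∀ s, y s ≤ x s) :
    ∏ s, ((∑ t, x t) - x s + σ) / ((∑ t, x t) + σ) ≤
      ∏ s, ((∑ t, y t) - y s + σ) / ((∑ t, y t) + σ) :=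
  antitoneOn_H hσ0 ⟨fun s => (hy s).1, fun s => (hy s).2⟩ ⟨fun s => (hx s).1, fun s => (hx s).2⟩
    hyx

/-- Monotonicity of `H(x;σ) = Π_s (‖x‖₁ − x_s + σ)/(‖x‖₁ + σ)`: on the region
`0 ≤ x ≤ σ`, if `y ≤ x` componentwise, then `H(y;σ) ≥ H(x;σ)`. -/
theorem H_antitone (n : ℕ) (σ : ℝ) (hσ0 : 0 < σ) (hσ1 : σ ≤ 1)
    (x y : Fin n → ℝ) (hx : ∀ s, 0 ≤ x s ∧ x s ≤ σ) (hy : ∀ s, 0 ≤ y s ∧ y s ≤ σ)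
    (hyx : ∀ s, y s ≤ x s) :
    ∏ s, ((∑ t, x t) - x s + σ) / ((∑ t, x t) + σ) ≤
      ∏ s, ((∑ t, y t) - y s + σ) / ((∑ t, y t) + σ) :=
  H_antitone_general n σ hσ0 x y hx hy hyx
end

section
/- For 0 < σ ≤ 1 define H(x;σ) = Π_{s=1}^n (‖x‖₁ − x_s + σ)/(‖x‖₁ + σ) for x ∈ ℝ^n with 0 ≤ x ≤ 1 componentwise. Then σ·H(x;1) ≤ H(x;σ) ≤ H(x;1). -/
/-!
Each factor of `H(x;σ)` is `1 - x_s/(‖x‖₁ + σ)`, increasing in `σ`, which gives the upper bound.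
For the lower bound, the quotient of the `s`-th factors at `σ ≤ τ` is `1 - ε_s` with
`ε_s = (τ - σ) x_s / ((‖x‖₁ - x_s + τ)(‖x‖₁ + σ)) ≤ (τ - σ) x_s / (τ (‖x‖₁ + σ))`,
so by the Weierstrass product inequality `H(x;σ)/H(x;τ) ≥ 1 - Σ ε_s ≥ σ/τ`.
-/

open Finset

theorem one_sub_sum_le_prod_one_sub {ι R : Type*} [CommRing R] [LinearOrder R]
    [IsStrictOrderedRing R] (s : Finset ι) {ε : ι → R} (h0 : ∀ i ∈ s, 0 ≤ ε i)
    (h1 : ∀ i ∈ s, ε i ≤ 1) : 1 - ∑ i ∈ s, ε i ≤ ∏ i ∈ s, (1 - ε i) := by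
  classical
  induction s using Finset.induction with
  | empty => simp
  | insert a s ha ih =>
    rw [sum_insert ha, prod_insert ha]
    have hs0 : 0 ≤ ∑ i ∈ s, ε i := sum_nonneg fun i hi => h0 i (mem_insert_of_mem hi)
    have ha0 := h0 a (mem_insert_self a s)
    have ha1 : 0 ≤ 1 - ε a := sub_nonneg.2 (h1 a (mem_insert_self a s))
    have ih := ih (fun i hi => h0 i (mem_insert_of_mem hi)) fun i hi => h1 i (mem_insert_of_mem hi)
    calc 1 - (ε a + ∑ i ∈ s, ε i)
        ≤ (1 - ε a) * (1 - ∑ i ∈ s, ε i) := by nlinarith [mul_nonneg ha0 hs0]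
      _ ≤ (1 - ε a) * ∏ i ∈ s, (1 - ε i) := mul_le_mul_of_nonneg_left ih ha1

namespace HSigma

section Factor

variable {S a σ τ : ℝ}

theorem factor_le_factor (hS : 0 ≤ S) (ha : 0 ≤ a) (hσ : 0 < σ) (hστ : σ ≤ τ) :
    (S - a + σ) / (S + σ) ≤ (S - a + τ) / (S + τ) := by
  rw [div_le_div_iff₀ (by linarith) (by linarith)]
  nlinarith [mul_nonneg ha (sub_nonneg.2 hστ)]

theorem factor_eq_factor_mul (ha : 0 ≤ a) (haS : a ≤ S) (hσ : 0 < σ) (hστ : σ ≤ τ) :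
    (S - a + σ) / (S + σ) =
      (S - a + τ) / (S + τ) * (1 - (τ - σ) * a / ((S - a + τ) * (S + σ))) := by
  have : S - a + τ ≠ 0 := by linarith
  have : S + σ ≠ 0 := by linarith
  have : S + τ ≠ 0 := by linarith
  field_simp
  ring

theorem factor_defect_nonneg (ha : 0 ≤ a) (haS : a ≤ S) (hσ : 0 < σ) (hστ : σ ≤ τ) :
    0 ≤ (τ - σ) * a / ((S - a + τ) * (S + σ)) := by
  have : 0 < S - a + τ := by linarith
  have : 0 < S + σ := by linarith
  positivity

theorem factor_defect_le (ha : 0 ≤ a) (haS : a ≤ S) (hσ : 0 < σ) (hστ : σ ≤ τ) :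
    (τ - σ) * a / ((S - a + τ) * (S + σ)) ≤ (τ - σ) * a / (τ * (S + σ)) := by
  have : 0 < S + σ := by linarith
  have : 0 ≤ τ - σ := sub_nonneg.2 hστ
  have : 0 < τ := hσ.trans_le hστ
  gcongr
  linarith

end Factor

variable {ι : Type*} [Fintype ι]

noncomputable def H (x : ι → ℝ) (σ : ℝ) : ℝ := ∏ s, ((∑ t, x t) - x s + σ) / ((∑ t, x t) + σ)

variable {x : ι → ℝ} {σ τ : ℝ}

theorem le_sum_of_nonneg (hx : ∀ s, 0 ≤ x s) (s : ι) : x s ≤ ∑ t, x t :=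
  single_le_sum (fun t _ => hx t) (mem_univ s)

theorem H_nonneg (hx : ∀ s, 0 ≤ x s) (hσ : 0 < σ) : 0 ≤ H x σ := by
  refine prod_nonneg fun s _ => div_nonneg ?_ ?_
  · linarith [le_sum_of_nonneg hx s]
  · linarith [sum_nonneg fun t (_ : t ∈ univ) => hx t]

theorem H_mono (hx : ∀ s, 0 ≤ x s) (hσ : 0 < σ) (hστ : σ ≤ τ) : H x σ ≤ H x τ := by
  have hS : 0 ≤ ∑ t, x t := sum_nonneg fun t _ => hx t
  refine prod_le_prod (fun s _ => ?_) fun s _ => factor_le_factor hS (hx s) hσ hστ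
  exact div_nonneg (by linarith [le_sum_of_nonneg hx s]) (by linarith)

theorem mul_H_le_mul_H (hx : ∀ s, 0 ≤ x s) (hσ : 0 < σ) (hστ : σ ≤ τ) :
    σ * H x τ ≤ τ * H x σ := by
  set S := ∑ t, x t
  have hS : 0 ≤ S := sum_nonneg fun t _ => hx t
  have hτ : 0 < τ := hσ.trans_le hστ
  set ε : ι → ℝ := fun s => (τ - σ) * x s / ((S - x s + τ) * (S + σ))
  have hε0 : ∀ s ∈ univ, 0 ≤ ε s := fun s _ =>
    factor_defect_nonneg (hx s) (le_sum_of_nonneg hx s) hσ hστ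
  have hsum : ∑ s, ε s ≤ 1 - σ / τ := calc
    ∑ s, ε s ≤ ∑ s, (τ - σ) * x s / (τ * (S + σ)) :=
      sum_le_sum fun s _ => factor_defect_le (hx s) (le_sum_of_nonneg hx s) hσ hστ
    _ = (τ - σ) * S / (τ * (S + σ)) := by rw [← sum_div, ← mul_sum]
    _ ≤ 1 - σ / τ := by
      rw [one_sub_div hτ.ne', div_le_div_iff₀ (by positivity) hτ]
      nlinarith [mul_nonneg (sub_nonneg.2 hστ) (mul_nonneg hτ.le hσ.le)]
  have hε1 : ∀ s ∈ univ, ε s ≤ 1 := fun s hs =>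
    (single_le_sum hε0 hs).trans (hsum.trans (by linarith [div_pos hσ hτ]))
  have hH : H x σ = H x τ * ∏ s, (1 - ε s) := by
    rw [H, H, ← prod_mul_distrib]
    exact prod_congr rfl fun s _ => factor_eq_factor_mul (hx s) (le_sum_of_nonneg hx s) hσ hστ
  calc σ * H x τ = τ * (H x τ * (σ / τ)) := by field_simp
    _ ≤ τ * (H x τ * ∏ s, (1 - ε s)) := by
      gcongr
      · exact H_nonneg hx hτ
      · linarith [one_sub_sum_le_prod_one_sub univ hε0 hε1]
    _ = τ * H x σ := by rw [hH]

end HSigma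

/-- For `H(x;σ) = Π_s (‖x‖₁ − x_s + σ)/(‖x‖₁ + σ)` and `0 ≤ x ≤ 1` componentwise:
`σ·H(x;1) ≤ H(x;σ) ≤ H(x;1)`. -/
theorem H_sigma_bounds (n : ℕ) (σ : ℝ) (hσ0 : 0 < σ) (hσ1 : σ ≤ 1)
    (x : Fin n → ℝ) (hx : ∀ s, 0 ≤ x s ∧ x s ≤ 1) :
    σ * ∏ s, ((∑ t, x t) - x s + 1) / ((∑ t, x t) + 1) ≤
      ∏ s, ((∑ t, x t) - x s + σ) / ((∑ t, x t) + σ) ∧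
    ∏ s, ((∑ t, x t) - x s + σ) / ((∑ t, x t) + σ) ≤
      ∏ s, ((∑ t, x t) - x s + 1) / ((∑ t, x t) + 1) := by
  have hx0 : ∀ s, 0 ≤ x s := fun s => (hx s).1
  refine ⟨?_, HSigma.H_mono hx0 hσ0 hσ1⟩
  have := HSigma.mul_H_le_mul_H hx0 hσ0 hσ1
  rwa [one_mul] at this
end

section
/- For i = 1,...,n let f_i : ℝ^{n_i} → ℝ ∪ {+∞} be proper and lower semi-continuous with bounded domain, let A_i be m × n_i real matrices and b ∈ ℝ^m. Define the perturbation function v : ℝ^m → ℝ ∪ {±∞} by v(z) = inf { Σ_{i=1}^n f_i(x^i) : Σ_{i=1}^n A_i x^i ≤ b + z }. Then v is lower semi-continuous. -/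
/-!
Fix `z₀` and `c < c' < v z₀`. For every `x` in the compact box `K = ∏ closure (dom fᵢ)`,
either `x` is infeasible at `z₀` (and, the constraint set being closed, stays infeasible
near `(z₀, x)`) or `Σ fᵢ(xⁱ) ≥ v z₀ > c'` (and, by lower semicontinuity, stays `> c'` near `x`).
By the tube lemma this holds uniformly on `K` for all `z` near `z₀`; as the objective is `⊤`
off `K`, this gives `v z ≥ c' > c`.
-/

open Filter Topology Set

namespace EReal

variable {ι : Type*} {s : Finset ι} {f : ι → EReal}

lemma sum_ne_bot (h : ∀ i ∈ s, f i ≠ ⊥) : ∑ i ∈ s, f i ≠ ⊥ :=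
  Finset.sum_induction f (· ≠ ⊥) (fun _ _ ha hb ↦ add_ne_bot_iff.2 ⟨ha, hb⟩) zero_ne_bot h

lemma ne_top_of_sum_ne_top (hbot : ∀ i ∈ s, f i ≠ ⊥) (h : ∑ i ∈ s, f i ≠ ⊤) {i : ι}
    (hi : i ∈ s) : f i ≠ ⊤ := by
  classical
  intro hi_top
  have hrest : ∑ j ∈ s.erase i, f j ≠ ⊥ := sum_ne_bot fun j hj ↦ hbot j (Finset.mem_of_mem_erase hj)
  rw [← Finset.add_sum_erase s f hi, hi_top, top_add_of_ne_bot hrest] at h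
  exact h rfl

theorem lowerSemicontinuous_sum {α : Type*} [TopologicalSpace α] {g : ι → α → EReal}
    (hg : ∀ i ∈ s, LowerSemicontinuous (g i)) (hbot : ∀ i ∈ s, ∀ x, g i x ≠ ⊥) :
    LowerSemicontinuous fun x ↦ ∑ i ∈ s, g i x := by
  classical
  induction s using Finset.induction_on with
  | empty => simpa using lowerSemicontinuous_const
  | insert a t ha ih =>
    simp only [Finset.sum_insert ha]
    refine (hg a (t.mem_insert_self a)).add'
      (ih (fun i hi ↦ hg i (Finset.mem_insert_of_mem hi))
        fun i hi ↦ hbot i (Finset.mem_insert_of_mem hi)) fun x ↦ ?_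
    exact continuousAt_add (.inr (sum_ne_bot fun i hi ↦ hbot i (Finset.mem_insert_of_mem hi) x))
      (.inl (hbot a (t.mem_insert_self a) x))

end EReal

theorem lowerSemicontinuous_sInf_image_of_isClosed {Z X α : Type*} [TopologicalSpace Z]
    [TopologicalSpace X] [CompleteLinearOrder α] [DenselyOrdered α] {g : X → α}
    (hg : LowerSemicontinuous g) {F : Set (Z × X)} (hF : IsClosed F) {K : Set X}
    (hK : IsCompact K) (hdom : ∀ x, g x ≠ ⊤ → x ∈ K) :
    LowerSemicontinuous fun z ↦ sInf (g '' {x | (z, x) ∈ F}) := by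
  intro z₀ c hc
  obtain ⟨c', hcc', hc'⟩ := exists_between hc
  have hnear : ∀ᶠ z in 𝓝 z₀, ∀ x ∈ K, (z, x) ∉ F ∨ c' < g x := by
    refine hK.eventually_forall_of_forall_eventually fun x _ ↦ ?_
    by_cases hx : (z₀, x) ∈ F
    · rw [nhds_prod_eq]
      have hgx : c' < g x := hc'.trans_le (sInf_le (mem_image_of_mem g hx))
      exact ((hg x c' hgx).prod_inr (𝓝 z₀)).mono fun _ h ↦ Or.inr h
    · exact Eventually.mono (hF.isOpen_compl.mem_nhds hx) fun _ h ↦ Or.inl h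
  filter_upwards [hnear] with z hz
  refine hcc'.trans_le (le_sInf ?_)
  rintro _ ⟨x, hx, rfl⟩
  by_cases hxtop : g x = ⊤
  · exact hxtop ▸ le_top
  · exact ((hz x (hdom x hxtop)).resolve_left (not_not.2 hx)).le

theorem perturbation_lsc_general (m n : ℕ) (ni : Fin n → ℕ)
    (f : ∀ i : Fin n, (Fin (ni i) → ℝ) → EReal)
    (hbot : ∀ i x, f i x ≠ ⊥)
    (hlsc : ∀ i, LowerSemicontinuous (f i))
    (hbdd : ∀ i, Bornology.IsBounded {x | f i x ≠ ⊤})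
    (A : ∀ i : Fin n, Matrix (Fin m) (Fin (ni i)) ℝ) (b : Fin m → ℝ)
    (v : (Fin m → ℝ) → EReal)
    (hv : ∀ z, v z = sInf {c : EReal | ∃ x : ∀ i : Fin n, Fin (ni i) → ℝ,
      (∀ j, (∑ i, (A i).mulVec (x i)) j ≤ b j + z j) ∧ c = ∑ i, f i (x i)}) :
    LowerSemicontinuous v := by
  set g : (∀ i, Fin (ni i) → ℝ) → EReal := fun x ↦ ∑ i, f i (x i)
  set F : Set ((Fin m → ℝ) × ∀ i, Fin (ni i) → ℝ) :=
    {p | ∀ j, (∑ i, (A i).mulVec (p.2 i)) j ≤ b j + p.1 j}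
  have hv_eq : v = fun z ↦ sInf (g '' {x | (z, x) ∈ F}) := by
    ext z
    rw [hv z]
    congr 1
    ext c
    exact exists_congr fun _ ↦ and_congr_right' eq_comm
  have hg : LowerSemicontinuous g :=
    EReal.lowerSemicontinuous_sum (fun i _ ↦ (hlsc i).comp (continuous_apply i))
      fun i _ x ↦ hbot i (x i)
  have hF : IsClosed F := by
    simp only [F, ofPred_forall]
    exact isClosed_iInter fun j ↦ isClosed_le (by fun_prop) (by fun_prop)
  have hK : IsCompact (univ.pi fun i ↦ closure {y | f i y ≠ ⊤}) :=
    isCompact_univ_pi fun i ↦ (hbdd i).isCompact_closure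
  have hdom : ∀ x, g x ≠ ⊤ → x ∈ univ.pi fun i ↦ closure {y | f i y ≠ ⊤} := fun x hx i _ ↦
    subset_closure (EReal.ne_top_of_sum_ne_top (fun i _ ↦ hbot i (x i)) hx (Finset.mem_univ i))
  exact hv_eq ▸ lowerSemicontinuous_sInf_image_of_isClosed hg hF hK hdom

/-- The perturbation function `v(z) = inf {Σ fᵢ(xⁱ) : Σ Aᵢ xⁱ ≤ b + z}` of a separable
problem with proper lower semicontinuous objectives with bounded domains is lower
semicontinuous. -/
theorem perturbation_lsc (m n : ℕ) (ni : Fin n → ℕ)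
    (f : ∀ i : Fin n, (Fin (ni i) → ℝ) → EReal)
    (hbot : ∀ i x, f i x ≠ ⊥) (hproper : ∀ i, ∃ x, f i x ≠ ⊤)
    (hlsc : ∀ i, LowerSemicontinuous (f i))
    (hbdd : ∀ i, Bornology.IsBounded {x | f i x ≠ ⊤})
    (A : ∀ i : Fin n, Matrix (Fin m) (Fin (ni i)) ℝ) (b : Fin m → ℝ)
    (v : (Fin m → ℝ) → EReal)
    (hv : ∀ z, v z = sInf {c : EReal | ∃ x : ∀ i : Fin n, Fin (ni i) → ℝ,
      (∀ j, (∑ i, (A i).mulVec (x i)) j ≤ b j + z j) ∧ c = ∑ i, f i (x i)}) :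
    LowerSemicontinuous v :=
  perturbation_lsc_general m n ni f hbot hlsc hbdd A b v hv
end

section
/- Let N and L be positive integers and let k_1,...,k_N be integers with 1 ≤ k_i ≤ L+1 for all i and Σ_{i=1}^N k_i ≤ N + L. Then Σ_{i=1}^N (k_i − 1)/k_i ≤ min{N,L} · L/(L + min{N,L}). -/
/-!
Write `kᵢ = 1 + xᵢ`. Since the `xᵢ` are natural numbers with `Σ xᵢ ≤ L`, at most `m = min{N,L}` of
them are nonzero. On the nonzero ones, the concave function `x / (x + 1)` lies below its tangent
line at `x = L / m`; the zero ones contribute nothing. Summing the tangent bound over at most `m`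
indices with total excess at most `L` gives exactly `m L / (L + m)`.
-/

open Finset

/-- The tangent-line bound with denominators cleared: the difference of the two sides is
`(a - b (x - 1))² / x`. -/
theorem sq_add_mul_sub_one_div_le (a b : ℝ) {x : ℝ} (hx : 0 < x) :
    (a + b) ^ 2 * ((x - 1) / x) ≤ a ^ 2 + b ^ 2 * (x - 1) := by
  have hdiff : a ^ 2 + b ^ 2 * (x - 1) - (a + b) ^ 2 * ((x - 1) / x)
      = (a - b * (x - 1)) ^ 2 / x := by
    field_simp
    ring
  have : 0 ≤ (a - b * (x - 1)) ^ 2 / x := by positivity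
  linarith

theorem sq_add_mul_sub_one_div_le_ite (a b : ℝ) {k : ℕ} (hk : 1 ≤ k) :
    (a + b) ^ 2 * (((k : ℝ) - 1) / k) ≤
      a ^ 2 * (if 2 ≤ k then 1 else 0) + b ^ 2 * ((k : ℝ) - 1) := by
  obtain rfl | hk2 := hk.eq_or_lt
  · simp
  · simpa [Nat.succ_le_of_lt hk2] using
      sq_add_mul_sub_one_div_le a b (by positivity : (0 : ℝ) < k)

section

variable {ι : Type*} (s : Finset ι) {k : ι → ℕ}

theorem sq_add_mul_sum_sub_one_div_le (a b : ℝ) (hk : ∀ i ∈ s, 1 ≤ k i) :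
    (a + b) ^ 2 * ∑ i ∈ s, ((k i : ℝ) - 1) / k i ≤
      a ^ 2 * #{i ∈ s | 2 ≤ k i} + b ^ 2 * ∑ i ∈ s, ((k i : ℝ) - 1) := by
  rw [natCast_card_filter, mul_sum, mul_sum, mul_sum, ← sum_add_distrib]
  exact sum_le_sum fun i hi => sq_add_mul_sub_one_div_le_ite a b (hk i hi)

theorem card_filter_two_le_le_sum_sub_one (hk : ∀ i ∈ s, 1 ≤ k i) :
    (#{i ∈ s | 2 ≤ k i} : ℝ) ≤ ∑ i ∈ s, ((k i : ℝ) - 1) := by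
  rw [natCast_card_filter]
  refine sum_le_sum fun i hi => ?_
  split_ifs with h2
  · have : (2 : ℝ) ≤ k i := by exact_mod_cast h2
    linarith
  · have : (1 : ℝ) ≤ k i := by exact_mod_cast hk i hi
    linarith

end

theorem sum_frac_bound_general (N L : ℕ) (hL : 0 < L) (k : Fin N → ℕ)
    (hk : ∀ i, 1 ≤ k i ∧ k i ≤ L + 1) (hsum : ∑ i, k i ≤ N + L) :
    ∑ i, ((k i : ℝ) - 1) / (k i : ℝ) ≤
      (min N L : ℝ) * (L : ℝ) / ((L : ℝ) + (min N L : ℝ)) := by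
  set m : ℝ := min N L
  have hk1 : ∀ i ∈ univ, 1 ≤ k i := fun i _ => (hk i).1
  have hexcess : ∑ i, ((k i : ℝ) - 1) ≤ L := by
    have : ((∑ i, k i : ℕ) : ℝ) ≤ N + L := by exact_mod_cast hsum
    rw [sum_sub_distrib, sum_const, card_univ, Fintype.card_fin, nsmul_one]
    push_cast at this
    linarith
  have hcard : (#{i | 2 ≤ k i} : ℝ) ≤ m := by
    refine le_min ?_ ((card_filter_two_le_le_sum_sub_one _ hk1).trans hexcess)
    simpa using (card_filter_le univ fun i => 2 ≤ k i : _)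
  have hLm : (0 : ℝ) < L + m := by positivity
  have hbound : (L + m) * ((L + m) * ∑ i, ((k i : ℝ) - 1) / k i) ≤ (L + m) * (m * L) :=
    calc (L + m) * ((L + m) * ∑ i, ((k i : ℝ) - 1) / k i)
        _ = ((L : ℝ) + m) ^ 2 * ∑ i, ((k i : ℝ) - 1) / k i := by ring
        _ ≤ (L : ℝ) ^ 2 * #{i | 2 ≤ k i} + m ^ 2 * ∑ i, ((k i : ℝ) - 1) :=
          sq_add_mul_sum_sub_one_div_le univ L m hk1
        _ ≤ (L : ℝ) ^ 2 * m + m ^ 2 * L := by gcongr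
        _ = (L + m) * (m * L) := by ring
  rw [le_div_iff₀ hLm, mul_comm]
  exact le_of_mul_le_mul_left hbound hLm

/-- If `1 ≤ kᵢ ≤ L+1` and `Σ_{i=1}^N kᵢ ≤ N + L`, then
`Σᵢ (kᵢ−1)/kᵢ ≤ min{N,L} · L/(L + min{N,L})`. -/
theorem sum_frac_bound (N L : ℕ) (hN : 0 < N) (hL : 0 < L) (k : Fin N → ℕ)
    (hk : ∀ i, 1 ≤ k i ∧ k i ≤ L + 1) (hsum : ∑ i, k i ≤ N + L) :
    ∑ i, ((k i : ℝ) - 1) / (k i : ℝ) ≤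
      (min N L : ℝ) * (L : ℝ) / ((L : ℝ) + (min N L : ℝ)) :=
  sum_frac_bound_general N L hL k hk hsum
end

section
/- Let N and L be positive integers and let k_1,...,k_N be integers with 1 ≤ k_i ≤ L+1 for all i and Σ_{i=1}^N k_i ≤ N + L. Then Σ_{i=1}^N log k_i ≤ min{N,L} · log(1 + L/min{N,L}). -/
/-!
At most `min N L` of the `kᵢ` differ from `1`, since each such `kᵢ` contributes at least one
to the excess `Σ (kᵢ - 1) ≤ L`. Padding these indices with indices where `kᵢ = 1` gives a set `T`
of exactly `m = min N L` indices outside which `log kᵢ = 0` and on which `Σ kᵢ ≤ m + L`.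
Concavity of `log` (AM–GM) then bounds `Σ_{i ∈ T} log kᵢ` by `m · log ((m + L) / m)`.
-/

open Finset Real

namespace Real

theorem sum_log_le_card_mul_log_div {ι : Type*} (s : Finset ι) {x : ι → ℝ}
    (hx : ∀ i ∈ s, 0 < x i) :
    ∑ i ∈ s, log (x i) ≤ #s * log ((∑ i ∈ s, x i) / #s) := by
  rcases s.eq_empty_or_nonempty with rfl | hs
  · simp
  have hcard : (0 : ℝ) < #s := by exact_mod_cast hs.card_pos
  have jensen := strictConcaveOn_log_Ioi.concaveOn.le_map_sum (t := s) (w := fun _ => (#s : ℝ)⁻¹)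
    (fun _ _ => by positivity) (by simp [hcard.ne']) hx
  simp only [smul_eq_mul, ← mul_sum] at jensen
  rw [div_eq_inv_mul]
  calc ∑ i ∈ s, log (x i) = #s * ((#s : ℝ)⁻¹ * ∑ i ∈ s, log (x i)) := by field_simp
    _ ≤ #s * log ((#s : ℝ)⁻¹ * ∑ i ∈ s, x i) := by gcongr

theorem sum_log_le_card_mul_log_one_add_div {ι : Type*} (s : Finset ι) {x : ι → ℝ} {c : ℝ}
    (hx : ∀ i ∈ s, 0 < x i) (hsum : ∑ i ∈ s, x i ≤ #s + c) :
    ∑ i ∈ s, log (x i) ≤ #s * log (1 + c / #s) := by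
  rcases s.eq_empty_or_nonempty with rfl | hs
  · simp
  have hcard : (0 : ℝ) < #s := by exact_mod_cast hs.card_pos
  have hmean_pos : 0 < (∑ i ∈ s, x i) / #s := div_pos (sum_pos hx hs) hcard
  have hmean_le : (∑ i ∈ s, x i) / #s ≤ 1 + c / #s := by
    rwa [div_le_iff₀ hcard, add_mul, div_mul_cancel₀ _ hcard.ne', one_mul]
  calc ∑ i ∈ s, log (x i) ≤ #s * log ((∑ i ∈ s, x i) / #s) := sum_log_le_card_mul_log_div s hx
    _ ≤ #s * log (1 + c / #s) := by gcongr

end Real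

theorem card_filter_ne_one_add_card_le_sum {ι : Type*} (s : Finset ι) {k : ι → ℕ}
    (hk : ∀ i ∈ s, 1 ≤ k i) :
    #{i ∈ s | k i ≠ 1} + #s ≤ ∑ i ∈ s, k i := by
  rw [card_filter, card_eq_sum_ones, ← sum_add_distrib]
  exact sum_le_sum fun i hi => by have := hk i hi; split_ifs <;> omega

theorem exists_card_eq_min_forall_notMem_eq_one {ι : Type*} [Fintype ι] {k : ι → ℕ} {L : ℕ}
    (hk : ∀ i, 1 ≤ k i) (hsum : ∑ i, k i ≤ Fintype.card ι + L) :
    ∃ T : Finset ι, #T = min (Fintype.card ι) L ∧ (∀ i ∉ T, k i = 1) ∧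
      ∑ i ∈ T, k i ≤ #T + L := by
  classical
  have hexcess := card_filter_ne_one_add_card_le_sum univ fun i _ => hk i
  rw [card_univ] at hexcess
  have hS : #{i | k i ≠ 1} ≤ min (Fintype.card ι) L :=
    le_min ((card_filter_le _ _).trans_eq (card_univ)) (by omega)
  obtain ⟨T, hST, -, hTcard⟩ := exists_subsuperset_card_eq (subset_univ _) hS (by simp)
  have hT_one : ∀ i ∉ T, k i = 1 := fun i hi => by
    by_contra h
    exact hi (hST (by simpa using h))
  refine ⟨T, hTcard, hT_one, ?_⟩
  have hcompl : ∑ i ∈ Tᶜ, k i = #Tᶜ := by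
    rw [card_eq_sum_ones]
    exact sum_congr rfl fun i hi => hT_one i (mem_compl.mp hi)
  have := sum_add_sum_compl T k
  have := card_add_card_compl T
  omega

theorem sum_log_bound_general (N L : ℕ) (k : Fin N → ℕ)
    (hk : ∀ i, 1 ≤ k i ∧ k i ≤ L + 1) (hsum : ∑ i, k i ≤ N + L) :
    ∑ i, Real.log (k i) ≤
      (min N L : ℝ) * Real.log (1 + (L : ℝ) / (min N L : ℝ)) := by
  obtain ⟨T, hTcard, hT_one, hT_sum⟩ :=
    exists_card_eq_min_forall_notMem_eq_one (fun i => (hk i).1) (by simpa using hsum)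
  rw [Fintype.card_fin] at hTcard
  have hlog : ∑ i, log (k i) = ∑ i ∈ T, log (k i) :=
    (sum_subset (subset_univ T) fun i _ hi => by simp [hT_one i hi]).symm
  rw [hlog, ← Nat.cast_min, ← hTcard]
  exact sum_log_le_card_mul_log_one_add_div T (fun i _ => by exact_mod_cast (hk i).1)
    (by exact_mod_cast hT_sum)

/-- If `1 ≤ kᵢ ≤ L+1` and `Σ_{i=1}^N kᵢ ≤ N + L`, then
`Σᵢ log kᵢ ≤ min{N,L} · log(1 + L/min{N,L})`. -/
theorem sum_log_bound (N L : ℕ) (hN : 0 < N) (hL : 0 < L) (k : Fin N → ℕ)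
    (hk : ∀ i, 1 ≤ k i ∧ k i ≤ L + 1) (hsum : ∑ i, k i ≤ N + L) :
    ∑ i, Real.log (k i) ≤
      (min N L : ℝ) * Real.log (1 + (L : ℝ) / (min N L : ℝ)) :=
  sum_log_bound_general N L k hk hsum
end

section
/- Let m, n be positive integers and let f_1,...,f_n be proper functions with ρ(f_1) ≥ ρ(f_2) ≥ ... ≥ ρ(f_n), where each ρ(f_i) is finite. For any integers k_1,...,k_n with 1 ≤ k_i ≤ m+1 for all i and Σ_{i=1}^n k_i ≤ m + n, one has Σ_{i=1}^n ρ^{k_i}(f_i) ≤ Σ_{i=1}^{min{m,n}} ρ(f_i). -/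
/-!
Only the indices with `kᵢ ≥ 2` contribute, since `ρ¹ ≤ 0`; there are at most `m` of them
because `Σ kᵢ ≤ m + n` while every `kᵢ ≥ 1`. Bounding each of these `ρ^{kᵢ}(fᵢ)` by `ρ(fᵢ)`,
the sum of at most `min m n` of the nonnegative, decreasingly ordered values `ρ(fᵢ)` is at most
the sum of the first `min m n` of them.
-/

open Finset

section Nonconvexity

variable {E : Type*} [AddCommMonoid E] [Module ℝ E]

lemma rhoK_one_nonpos (f : E → EReal) : rhoK 1 f ≤ 0 := by
  refine sSup_le ?_
  rintro _ ⟨x, α, -, -, hα, rfl⟩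
  rw [Fin.sum_univ_one] at hα
  simpa [hα] using EReal.sub_self_le_zero

lemma rhoK_le_rho (k : ℕ) (f : E → EReal) : rhoK k f ≤ rho f :=
  le_iSup (fun k => rhoK k f) k

lemma rho_nonneg {f : E → EReal} {x : E} (hx_top : f x ≠ ⊤) (hx_bot : f x ≠ ⊥) :
    0 ≤ rho f := by
  refine le_trans (le_sSup ?_) (rhoK_le_rho 1 f)
  refine ⟨fun _ => x, fun _ => 1, fun _ => hx_top, fun _ => zero_le_one, by simp, ?_⟩
  lift f x to ℝ using ⟨hx_top, hx_bot⟩ with r hr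
  simp [← hr]

end Nonconvexity

section TopValues

variable {ι M : Type*} [AddCommMonoid M] [LinearOrder M] [IsOrderedAddMonoid M]

lemma Finset.sum_le_sum_of_card_le_of_forall_le [DecidableEq ι] {g : ι → M} {S T : Finset ι}
    (hcard : #S ≤ #T) (hT : ∀ i ∉ T, ∀ j ∈ T, g i ≤ g j) (hnonneg : ∀ j ∈ T, 0 ≤ g j) :
    ∑ i ∈ S, g i ≤ ∑ i ∈ T, g i := by
  rw [← sum_inter_add_sum_sdiff S T, ← sum_inter_add_sum_sdiff T S, inter_comm T S]
  refine add_le_add le_rfl ?_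
  obtain hA | hA := (S \ T).eq_empty_or_nonempty
  · simpa [hA] using sum_nonneg fun j hj => hnonneg j (mem_sdiff.1 hj).1
  have hcard' : #(S \ T) ≤ #(T \ S) := by
    have := card_sdiff_add_card_inter S T
    have := card_sdiff_add_card_inter T S
    rw [inter_comm] at this
    omega
  obtain ⟨B, hBsub, hBcard⟩ := le_card_iff_exists_subset_card.1 hcard'
  set M₀ := (S \ T).sup' hA g
  have hM₀ : ∀ j ∈ B, M₀ ≤ g j := fun j hj =>
    sup'_le _ _ fun i hi => hT i (mem_sdiff.1 hi).2 j (mem_sdiff.1 (hBsub hj)).1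
  calc ∑ i ∈ S \ T, g i ≤ #(S \ T) • M₀ := sum_le_card_nsmul _ _ _ fun i hi => le_sup' g hi
    _ = #B • M₀ := by rw [hBcard]
    _ ≤ ∑ j ∈ B, g j := card_nsmul_le_sum _ _ _ hM₀
    _ ≤ ∑ j ∈ T \ S, g j :=
      sum_le_sum_of_subset_of_nonneg hBsub fun j hj _ => hnonneg j (mem_sdiff.1 hj).1

lemma Antitone.sum_le_sum_filter_lt {n c : ℕ} {g : Fin n → M} (hg : Antitone g)
    (hnonneg : ∀ i, 0 ≤ g i) {S : Finset (Fin n)} (hS : #S ≤ c) :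
    ∑ i ∈ S, g i ≤ ∑ i ∈ univ.filter (fun i : Fin n => (i : ℕ) < c), g i := by
  refine sum_le_sum_of_card_le_of_forall_le ?_ ?_ fun j _ => hnonneg j
  · rw [Fin.card_filter_val_lt]
    exact le_min (by simpa using card_le_univ S) hS
  · intro i hi j hj
    simp only [mem_filter, mem_univ, true_and, not_lt] at hi hj
    exact hg (Fin.le_def.2 (by omega))

end TopValues

lemma card_filter_two_le_add_card_le_sum {ι : Type*} {s : Finset ι} {k : ι → ℕ}
    (hk : ∀ i ∈ s, 1 ≤ k i) : #{i ∈ s | 2 ≤ k i} + #s ≤ ∑ i ∈ s, k i := by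
  rw [card_filter, card_eq_sum_ones, ← sum_add_distrib]
  exact sum_le_sum fun i hi => by have := hk i hi; split_ifs <;> omega

theorem sum_rhoK_le_sum_rho_general (m n : ℕ)
    (d : Fin n → ℕ) (f : ∀ i : Fin n, (Fin (d i) → ℝ) → EReal)
    (hbot : ∀ i x, f i x ≠ ⊥) (hproper : ∀ i, ∃ x, f i x ≠ ⊤)
    (hsorted : ∀ i j : Fin n, i ≤ j → rho (f j) ≤ rho (f i))
    (k : Fin n → ℕ) (hk : ∀ i, 1 ≤ k i ∧ k i ≤ m + 1) (hsum : ∑ i, k i ≤ m + n) :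
    ∑ i, rhoK (k i) (f i) ≤
      ∑ i ∈ Finset.univ.filter (fun i : Fin n => (i : ℕ) < min m n), rho (f i) := by
  set S : Finset (Fin n) := {i | 2 ≤ k i}
  have hS : #S ≤ min m n := by
    have : #S + #(univ : Finset (Fin n)) ≤ ∑ i, k i :=
      card_filter_two_le_add_card_le_sum fun i _ => (hk i).1
    rw [card_univ, Fintype.card_fin] at this
    exact le_min (by omega) (by simpa using card_le_univ S)
  have hρ_nonneg : ∀ i, 0 ≤ rho (f i) := fun i =>
    let ⟨x, hx⟩ := hproper i
    rho_nonneg hx (hbot i x)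
  calc ∑ i, rhoK (k i) (f i) ≤ ∑ i ∈ S, rhoK (k i) (f i) :=
        sum_le_sum_of_subset_of_nonpos' (subset_univ S) fun i _ hi => by
          have hki : k i = 1 := by
            have := (hk i).1
            simp only [S, mem_filter, mem_univ, true_and] at hi
            omega
          exact hki ▸ rhoK_one_nonpos _
    _ ≤ ∑ i ∈ S, rho (f i) := sum_le_sum fun i _ => rhoK_le_rho _ _
    _ ≤ _ := Antitone.sum_le_sum_filter_lt hsorted hρ_nonneg hS

/-- If `ρ(f₁) ≥ ρ(f₂) ≥ ... ≥ ρ(fₙ)` are finite and `1 ≤ kᵢ ≤ m+1` with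
`Σ kᵢ ≤ m + n`, then `Σᵢ ρ^{kᵢ}(fᵢ) ≤ Σ_{i < min{m,n}} ρ(fᵢ)`. -/
theorem sum_rhoK_le_sum_rho (m n : ℕ) (hm : 0 < m) (hn : 0 < n)
    (d : Fin n → ℕ) (f : ∀ i : Fin n, (Fin (d i) → ℝ) → EReal)
    (hbot : ∀ i x, f i x ≠ ⊥) (hproper : ∀ i, ∃ x, f i x ≠ ⊤)
    (hfin : ∀ i, rho (f i) ≠ ⊤ ∧ rho (f i) ≠ ⊥)
    (hsorted : ∀ i j : Fin n, i ≤ j → rho (f j) ≤ rho (f i))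
    (k : Fin n → ℕ) (hk : ∀ i, 1 ≤ k i ∧ k i ≤ m + 1) (hsum : ∑ i, k i ≤ m + n) :
    ∑ i, rhoK (k i) (f i) ≤
      ∑ i ∈ Finset.univ.filter (fun i : Fin n => (i : ℕ) < min m n), rho (f i) :=
  sum_rhoK_le_sum_rho_general m n d f hbot hproper hsorted k hk hsum
end
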